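/- arXiv:1605.04388 — 7 statements merged into one kernel-verified Lean document; each statement's English description precedes it below -/
import Mathlib

section
/- Let H ∈ (1/2, 1), set α_H = H(2H−1) and φ(y) = α_H |y|^{2H−2} for y ≠ 0. Then there exists a constant C > 0, depending only on H, such that for every δ ∈ [0, H], every λ > 0 and all real numbers 0 ≤ s < t, one has λ^{2δ} ∫_s^t ∫_s^t e^{−λ(2t−u−v)} φ(u−v) du dv ≤ C (t−s)^{2(H−δ)}. -/
/-!
Write `K` for the double integral with `φ` replaced by `|u - v| ^ (2H - 2)`. Dropping the
exponential gives `α_H K ≤ (t - s) ^ (2H)`. Splitting the inner integral at `v = u`, the part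
`v < u` carries a factor `e^{-2λ(t-u)}` times a truncated Gamma integral and the part `v > u` a
factor `e^{-λ(t-u)}` times `(t - u) ^ (2H - 1)`; integrating in `u` gives the scale-free bound
`λ ^ (2H) K ≤ (3/2) Γ(2H - 1)`. The two bounds are interpolated through
`λ ^ (2δ) K = (λ ^ (2H) K) ^ (δ/H) K ^ (1 - δ/H)`.
-/

open MeasureTheory Set Real

lemma rpow_mul_mul_le_rpow_mul_rpow {x a A B p θ : ℝ} (hx : 0 ≤ x) (ha : 0 ≤ a)
    (hθ₀ : 0 ≤ θ) (hθ₁ : θ ≤ 1) (hA : a ≤ A) (hB : x ^ p * a ≤ B) :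
    x ^ (p * θ) * a ≤ B ^ θ * A ^ (1 - θ) := calc
  x ^ (p * θ) * a = (x ^ p * a) ^ θ * a ^ (1 - θ) := by
    rw [mul_rpow (by positivity) ha, rpow_mul hx, mul_assoc, ← rpow_add' ha (by norm_num),
      add_sub_cancel, rpow_one]
  _ ≤ B ^ θ * A ^ (1 - θ) := by
    have hB₀ : 0 ≤ B := (by positivity : 0 ≤ x ^ p * a).trans hB
    gcongr

section

variable {p : ℝ}

lemma intervalIntegrable_abs_rpow (hp : -1 < p) (a b : ℝ) :
    IntervalIntegrable (fun x => |x| ^ p) volume a b := by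
  have hpos : ∀ c, 0 ≤ c → IntervalIntegrable (fun x => |x| ^ p) volume 0 c := fun c hc =>
    (intervalIntegral.intervalIntegrable_rpow' hp).congr fun x hx => by
      rw [uIoc_of_le hc] at hx
      simp only [abs_of_pos hx.1]
  have h0 : ∀ c, IntervalIntegrable (fun x => |x| ^ p) volume 0 c := by
    intro c
    rcases le_total 0 c with hc | hc
    · exact hpos c hc
    · simpa using (hpos (-c) (neg_nonneg.mpr hc)).comp_sub_left 0
  exact (h0 a).symm.trans (h0 b)

lemma intervalIntegrable_abs_sub_rpow (hp : -1 < p) (u a b : ℝ) :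
    IntervalIntegrable (fun v => |u - v| ^ p) volume a b := by
  simpa using (intervalIntegrable_abs_rpow hp (u - a) (u - b)).comp_sub_left u

lemma integral_sub_rpow_left (hp : -1 < p) (s t : ℝ) :
    ∫ u in s..t, (t - u) ^ p = (t - s) ^ (p + 1) / (p + 1) := by
  simp [intervalIntegral.integral_comp_sub_left (· ^ p), integral_rpow (Or.inl hp),
    zero_rpow (by linarith : p + 1 ≠ 0)]

lemma integral_sub_rpow_right (hp : -1 < p) (s t : ℝ) :
    ∫ u in s..t, (u - s) ^ p = (t - s) ^ (p + 1) / (p + 1) := by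
  simp [intervalIntegral.integral_comp_sub_right (· ^ p), integral_rpow (Or.inl hp),
    zero_rpow (by linarith : p + 1 ≠ 0)]

lemma integral_abs_sub_rpow (hp : -1 < p) {s t u : ℝ} (hsu : s ≤ u) (hut : u ≤ t) :
    ∫ v in s..t, |u - v| ^ p = ((u - s) ^ (p + 1) + (t - u) ^ (p + 1)) / (p + 1) := by
  rw [← intervalIntegral.integral_add_adjacent_intervals
    (intervalIntegrable_abs_sub_rpow hp u s u) (intervalIntegrable_abs_sub_rpow hp u u t),
    add_div, ← integral_sub_rpow_left hp, ← integral_sub_rpow_right hp]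
  congr 1
  · refine intervalIntegral.integral_congr fun v hv => ?_
    rw [uIcc_of_le hsu] at hv
    simp only [abs_of_nonneg (sub_nonneg.mpr hv.2)]
  · refine intervalIntegral.integral_congr fun v hv => ?_
    rw [uIcc_of_le hut] at hv
    simp only [abs_sub_comm u, abs_of_nonneg (sub_nonneg.mpr hv.1)]

lemma integral_rpow_mul_exp_neg_mul_le (hp : -1 < p) {l c : ℝ} (hl : 0 < l) (hc : 0 ≤ c) :
    ∫ x in 0..c, x ^ p * exp (-(l * x)) ≤ (1 / l) ^ (p + 1) * Gamma (p + 1) := by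
  have hint : IntegrableOn (fun x : ℝ => x ^ p * exp (-(l * x))) (Ioi 0) := by
    simpa [neg_mul] using integrableOn_rpow_mul_exp_neg_mul_rpow hp one_pos hl
  rw [← integral_rpow_mul_exp_neg_mul_Ioi (by linarith) hl, add_sub_cancel_right,
    intervalIntegral.integral_of_le hc, integral_Ioc_eq_integral_Ioo]
  refine setIntegral_mono_set hint ?_ (Ioo_subset_Ioi_self.eventuallyLE)
  filter_upwards [self_mem_ae_restrict measurableSet_Ioi] with x hx
  exact mul_nonneg (rpow_nonneg (le_of_lt hx) _) (exp_pos _).le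

variable {l s t : ℝ}

noncomputable def expKernelIntegral (p l s t : ℝ) : ℝ :=
  ∫ u in s..t, ∫ v in s..t, exp (-l * (2 * t - u - v)) * |u - v| ^ p

lemma intervalIntegrable_exp_mul_abs_sub_rpow (hp : -1 < p) (l t u a b : ℝ) :
    IntervalIntegrable (fun v => exp (-l * (2 * t - u - v)) * |u - v| ^ p) volume a b :=
  (intervalIntegrable_abs_sub_rpow hp u a b).continuousOn_mul (by fun_prop)

lemma expKernelIntegral_le_integral {g : ℝ → ℝ} (hst : s ≤ t)
    (hg : IntervalIntegrable g volume s t)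
    (h : ∀ u ∈ Icc s t, ∫ v in s..t, exp (-l * (2 * t - u - v)) * |u - v| ^ p ≤ g u) :
    expKernelIntegral p l s t ≤ ∫ u in s..t, g u := by
  rw [expKernelIntegral, intervalIntegral.integral_of_le hst, intervalIntegral.integral_of_le hst]
  refine integral_mono_of_nonneg (ae_of_all _ fun u => ?_) hg.1
    (ae_restrict_of_forall_mem measurableSet_Ioc fun u hu => h u (Ioc_subset_Icc_self hu))
  exact intervalIntegral.integral_nonneg hst fun v _ => by positivity

lemma expKernelIntegral_nonneg (hst : s ≤ t) : 0 ≤ expKernelIntegral p l s t :=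
  intervalIntegral.integral_nonneg hst fun u _ =>
    intervalIntegral.integral_nonneg hst fun v _ => by positivity

lemma integral_exp_mul_abs_sub_rpow_le (hp : -1 < p) (hl : 0 ≤ l) {u : ℝ} (hsu : s ≤ u)
    (hut : u ≤ t) :
    ∫ v in s..t, exp (-l * (2 * t - u - v)) * |u - v| ^ p
      ≤ ((u - s) ^ (p + 1) + (t - u) ^ (p + 1)) / (p + 1) := by
  rw [← integral_abs_sub_rpow hp hsu hut]
  refine intervalIntegral.integral_mono_on (hsu.trans hut)
    (intervalIntegrable_exp_mul_abs_sub_rpow hp l t u s t)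
    (intervalIntegrable_abs_sub_rpow hp u s t) fun v hv => ?_
  refine mul_le_of_le_one_left (by positivity) (exp_le_one_iff.mpr ?_)
  nlinarith [hv.2]

lemma expKernelIntegral_le_rpow (hp : -1 < p) (hl : 0 ≤ l) (hst : s ≤ t) :
    expKernelIntegral p l s t ≤ 2 * (t - s) ^ (p + 2) / ((p + 1) * (p + 2)) := by
  have hp1 : 0 ≤ p + 1 := by linarith
  have hint : IntervalIntegrable (fun u => (u - s) ^ (p + 1)) volume s t :=
    Continuous.intervalIntegrable (by fun_prop (disch := assumption)) _ _
  have hint' : IntervalIntegrable (fun u => (t - u) ^ (p + 1)) volume s t :=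
    Continuous.intervalIntegrable (by fun_prop (disch := assumption)) _ _
  refine (expKernelIntegral_le_integral hst ((hint.add hint').div_const _)
    fun u hu => integral_exp_mul_abs_sub_rpow_le hp hl hu.1 hu.2).trans_eq ?_
  rw [intervalIntegral.integral_div, intervalIntegral.integral_add hint hint',
    integral_sub_rpow_right (by linarith), integral_sub_rpow_left (by linarith),
    show p + 1 + 1 = p + 2 by ring]
  field_simp
  ring

lemma integral_exp_mul_abs_sub_rpow_lower_le (hp : -1 < p) (hl : 0 < l) {u : ℝ} (hsu : s ≤ u) :
    ∫ v in s..u, exp (-l * (2 * t - u - v)) * |u - v| ^ p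
      ≤ (1 / l) ^ (p + 1) * Gamma (p + 1) * exp (-(2 * l * (t - u))) := by
  have hsplit : EqOn (fun v => exp (-l * (2 * t - u - v)) * |u - v| ^ p)
      (fun v => exp (-(2 * l * (t - u))) * ((u - v) ^ p * exp (-(l * (u - v))))) (uIcc s u) := by
    intro v hv
    rw [uIcc_of_le hsu] at hv
    simp only [abs_of_nonneg (sub_nonneg.mpr hv.2), mul_left_comm _ (_ ^ p), ← exp_add]
    ring_nf
  rw [intervalIntegral.integral_congr hsplit, intervalIntegral.integral_const_mul,
    intervalIntegral.integral_comp_sub_left (fun w => w ^ p * exp (-(l * w))), sub_self, mul_comm]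
  gcongr
  exact integral_rpow_mul_exp_neg_mul_le hp hl (sub_nonneg.mpr hsu)

lemma integral_exp_mul_abs_sub_rpow_upper_le (hp : -1 < p) (hl : 0 ≤ l) {u : ℝ}
    (hut : u ≤ t) :
    ∫ v in u..t, exp (-l * (2 * t - u - v)) * |u - v| ^ p
      ≤ (t - u) ^ (p + 1) * exp (-(l * (t - u))) / (p + 1) := calc
  _ ≤ ∫ v in u..t, |u - v| ^ p * exp (-(l * (t - u))) := by
    refine intervalIntegral.integral_mono_on hut
      (intervalIntegrable_exp_mul_abs_sub_rpow hp l t u u t)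
      ((intervalIntegrable_abs_sub_rpow hp u u t).mul_const _) fun v hv => ?_
    rw [mul_comm]
    gcongr
    nlinarith [hv.2]
  _ = (t - u) ^ (p + 1) * exp (-(l * (t - u))) / (p + 1) := by
    rw [intervalIntegral.integral_mul_const, mul_div_right_comm, ← integral_sub_rpow_right hp]
    congr 1
    refine intervalIntegral.integral_congr fun v hv => ?_
    rw [uIcc_of_le hut] at hv
    simp only [abs_sub_comm u, abs_of_nonneg (sub_nonneg.mpr hv.1)]

lemma integral_exp_mul_abs_sub_rpow_le_Gamma (hp : -1 < p) (hl : 0 < l) {u : ℝ} (hsu : s ≤ u)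
    (hut : u ≤ t) :
    ∫ v in s..t, exp (-l * (2 * t - u - v)) * |u - v| ^ p
      ≤ (1 / l) ^ (p + 1) * Gamma (p + 1) * exp (-(2 * l * (t - u)))
        + (t - u) ^ (p + 1) * exp (-(l * (t - u))) / (p + 1) := by
  rw [← intervalIntegral.integral_add_adjacent_intervals
    (intervalIntegrable_exp_mul_abs_sub_rpow hp l t u s u)
    (intervalIntegrable_exp_mul_abs_sub_rpow hp l t u u t)]
  exact add_le_add (integral_exp_mul_abs_sub_rpow_lower_le hp hl hsu)
    (integral_exp_mul_abs_sub_rpow_upper_le hp hl.le hut)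

lemma expKernelIntegral_le_Gamma (hp : -1 < p) (hl : 0 < l) (hst : s ≤ t) :
    expKernelIntegral p l s t
      ≤ (1 / l) ^ (p + 1) * Gamma (p + 1) * (1 / (2 * l))
        + (1 / l) ^ (p + 2) * Gamma (p + 2) / (p + 1) := by
  set G := (1 / l) ^ (p + 1) * Gamma (p + 1)
  have hp1 : 0 ≤ p + 1 := by linarith
  have hint₁ : IntervalIntegrable (fun x => exp (-(2 * l * x))) volume 0 (t - s) :=
    Continuous.intervalIntegrable (by fun_prop) _ _
  have hint₂ : IntervalIntegrable (fun x => x ^ (p + 1) * exp (-(l * x))) volume 0 (t - s) :=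
    Continuous.intervalIntegrable (by fun_prop (disch := assumption)) _ _
  have hK : expKernelIntegral p l s t
      ≤ ∫ x in 0..t - s, (G * exp (-(2 * l * x)) + x ^ (p + 1) * exp (-(l * x)) / (p + 1)) := by
    rw [← sub_self t, ← intervalIntegral.integral_comp_sub_left
      (fun x => G * exp (-(2 * l * x)) + x ^ (p + 1) * exp (-(l * x)) / (p + 1))]
    exact expKernelIntegral_le_integral hst
      (Continuous.intervalIntegrable (by fun_prop (disch := assumption)) _ _)
      fun u hu => integral_exp_mul_abs_sub_rpow_le_Gamma hp hl hu.1 hu.2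
  have hexp : ∫ x in 0..t - s, exp (-(2 * l * x)) ≤ 1 / (2 * l) := by
    simpa using integral_rpow_mul_exp_neg_mul_le (p := 0) (by norm_num)
      (by positivity : 0 < 2 * l) (sub_nonneg.mpr hst)
  have hGamma : ∫ x in 0..t - s, x ^ (p + 1) * exp (-(l * x))
      ≤ (1 / l) ^ (p + 2) * Gamma (p + 2) := by
    rw [show p + 2 = p + 1 + 1 by ring]
    exact integral_rpow_mul_exp_neg_mul_le (by linarith) hl (sub_nonneg.mpr hst)
  rw [intervalIntegral.integral_add (hint₁.const_mul G) (hint₂.div_const _),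
    intervalIntegral.integral_const_mul, intervalIntegral.integral_div] at hK
  exact hK.trans (by gcongr)

lemma rpow_mul_expKernelIntegral_le (hp : -1 < p) (hl : 0 < l) (hst : s ≤ t) :
    l ^ (p + 2) * expKernelIntegral p l s t ≤ 3 / 2 * Gamma (p + 1) := by
  refine (mul_le_mul_of_nonneg_left (expKernelIntegral_le_Gamma hp hl hst)
    (by positivity)).trans_eq ?_
  have : p + 1 ≠ 0 := by linarith
  rw [show p + 2 = p + 1 + 1 by ring, Gamma_add_one this]
  simp only [one_div, inv_rpow hl.le, rpow_add_one hl.ne']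
  field_simp
  ring

lemma setIntegral_Ioo_Ioo_eq_mul_expKernelIntegral (hst : s ≤ t) (c : ℝ) :
    ∫ u in Ioo s t, ∫ v in Ioo s t, exp (-l * (2 * t - u - v)) * (c * |u - v| ^ p)
      = c * expKernelIntegral p l s t := by
  simp only [mul_left_comm _ c, integral_const_mul, ← integral_Ioc_eq_integral_Ioo,
    ← intervalIntegral.integral_of_le hst, expKernelIntegral]

variable {H : ℝ}

lemma hurst_mul_expKernelIntegral_le_rpow (hH : 1 / 2 < H) (hl : 0 ≤ l) (hst : s ≤ t) :
    H * (2 * H - 1) * expKernelIntegral (2 * H - 2) l s t ≤ (t - s) ^ (2 * H) := by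
  grw [expKernelIntegral_le_rpow (by linarith) hl hst]
  · rw [show 2 * H - 2 + 2 = 2 * H by ring, show 2 * H - 2 + 1 = 2 * H - 1 by ring]
    have : H * 2 - 1 ≠ 0 := by linarith
    have : H ≠ 0 := by linarith
    apply le_of_eq
    field_simp
  · nlinarith

lemma rpow_mul_hurst_mul_expKernelIntegral_le (hH : 1 / 2 < H) (hl : 0 < l) (hst : s ≤ t) :
    l ^ (2 * H) * (H * (2 * H - 1) * expKernelIntegral (2 * H - 2) l s t)
      ≤ H * (2 * H - 1) * (3 / 2 * Gamma (2 * H - 1)) := by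
  rw [mul_left_comm, show l ^ (2 * H) = l ^ (2 * H - 2 + 2) by ring_nf]
  grw [rpow_mul_expKernelIntegral_le (by linarith) hl hst]
  · rw [show 2 * H - 2 + 1 = 2 * H - 1 by ring]
  · nlinarith

end

/-- For `H ∈ (1/2, 1)` and `φ(y) = H(2H-1)|y|^{2H-2}`, there is `C > 0`
(depending only on `H`) such that for every `δ ∈ [0, H]`, every `λ > 0` and all
`0 ≤ s < t`, one has
`λ^{2δ} ∫_s^t ∫_s^t e^{-λ(2t-u-v)} φ(u-v) du dv ≤ C (t-s)^{2(H-δ)}`. -/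
theorem stmt_2 (H : ℝ) (hH : H ∈ Set.Ioo (1/2 : ℝ) 1) :
    ∃ C : ℝ, 0 < C ∧ ∀ δ : ℝ, δ ∈ Set.Icc 0 H → ∀ l : ℝ, 0 < l →
      ∀ s t : ℝ, 0 ≤ s → s < t →
      l ^ (2 * δ) *
        (∫ u in Set.Ioo s t, ∫ v in Set.Ioo s t,
          Real.exp (-l * (2*t - u - v)) * (H * (2*H - 1) * |u - v| ^ (2*H - 2)))
        ≤ C * (t - s) ^ (2 * (H - δ)) := by
  obtain ⟨hH₁, -⟩ := hH
  set B := H * (2 * H - 1) * (3 / 2 * Gamma (2 * H - 1))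
  refine ⟨max 1 B, by positivity, fun δ ⟨hδ₀, hδH⟩ l hl s t _ hst => ?_⟩
  have hθ₀ : 0 ≤ δ / H := by positivity
  have hθ₁ : δ / H ≤ 1 := (div_le_one (by linarith)).mpr hδH
  have hB₀ : 0 ≤ B := mul_nonneg (by nlinarith)
    (mul_nonneg (by norm_num) (Gamma_pos_of_pos (by linarith)).le)
  have hBC : B ^ (δ / H) ≤ max 1 B := calc
    B ^ (δ / H) ≤ max 1 B ^ (δ / H) := by gcongr; exact le_max_right _ _
    _ ≤ max 1 B := rpow_le_self_of_one_le (le_max_left _ _) hθ₁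
  rw [setIntegral_Ioo_Ioo_eq_mul_expKernelIntegral hst.le]
  calc l ^ (2 * δ) * (H * (2 * H - 1) * expKernelIntegral (2 * H - 2) l s t)
      = l ^ (2 * H * (δ / H)) * (H * (2 * H - 1) * expKernelIntegral (2 * H - 2) l s t) := by
        field_simp
    _ ≤ B ^ (δ / H) * ((t - s) ^ (2 * H)) ^ (1 - δ / H) :=
        rpow_mul_mul_le_rpow_mul_rpow hl.le
          (mul_nonneg (by nlinarith) (expKernelIntegral_nonneg hst.le)) hθ₀ hθ₁
          (hurst_mul_expKernelIntegral_le_rpow hH₁ hl.le hst.le)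
          (rpow_mul_hurst_mul_expKernelIntegral_le hH₁ hl hst.le)
    _ ≤ max 1 B * (t - s) ^ (2 * (H - δ)) := by
        rw [← rpow_mul (by linarith), show 2 * H * (1 - δ / H) = 2 * (H - δ) by field_simp]
        exact mul_le_mul_of_nonneg_right hBC (by positivity)
end

section
/- Let H ∈ (1/2, 1) and set α_H = H(2H−1). There exists a constant C > 0, depending only on H, such that for every δ ∈ [0, H], every λ > 0 and all 0 ≤ s < t, one has α_H λ^{2δ} ∫_s^t ∫_s^v e^{−λ(2t−u−v)} (v−u)^{2H−2} du dv ≤ C (t−s)^{2(H−δ)}. -/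
open MeasureTheory Set Real

/-!
Write `I` for the double integral. Bounding the exponential by `1` gives
`I ≤ C₁ (t - s)^{2H}`; factoring `e^{-λ(2t-u-v)} = e^{-2λ(t-v)} e^{-λ(v-u)}` and extending the
`u`-integral to the full Gamma integral `∫₀^∞ x^{2H-2} e^{-λx} dx = Γ(2H-1) λ^{1-2H}` gives
`I ≤ C₂ λ^{-2H}`. Interpolating geometrically between the two bounds with weight `θ = δ/H`
gives `λ^{2δ} I ≤ max C₁ C₂ · (t - s)^{2(H-δ)}`.
-/

noncomputable def triangleExpKernelIntegral (r l s t : ℝ) : ℝ :=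
  ∫ v in Ioo s t, ∫ u in Ioo s v, exp (-l * (2 * t - u - v)) * (v - u) ^ r

lemma setIntegral_Ioo_comp_sub_left (f : ℝ → ℝ) {s v : ℝ} (h : s ≤ v) :
    ∫ u in Ioo s v, f (v - u) = ∫ x in Ioc 0 (v - s), f x := by
  rw [← integral_Ioc_eq_integral_Ioo, ← intervalIntegral.integral_of_le h,
    intervalIntegral.integral_comp_sub_left f v, sub_self,
    intervalIntegral.integral_of_le (sub_nonneg.mpr h)]

lemma integrableOn_Ioo_rpow_sub {r s v : ℝ} (hr : -1 < r) :
    IntegrableOn (fun u => (v - u) ^ r) (Ioo s v) := by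
  rcases le_or_gt s v with h | h
  · have := (intervalIntegral.intervalIntegrable_rpow' (a := 0) (b := v - s) hr).comp_sub_left v
    rw [sub_zero, sub_sub_cancel] at this
    exact (intervalIntegrable_iff_integrableOn_Ioo_of_le h).mp this.symm
  · simp [Ioo_eq_empty_of_le h.le]

lemma setIntegral_Ioo_rpow_sub {r s v : ℝ} (hr : -1 < r) (h : s ≤ v) :
    ∫ u in Ioo s v, (v - u) ^ r = (v - s) ^ (r + 1) / (r + 1) := by
  rw [setIntegral_Ioo_comp_sub_left (· ^ r) h, ← intervalIntegral.integral_of_le (by linarith),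
    integral_rpow (Or.inl hr), zero_rpow (by linarith), sub_zero]

lemma setIntegral_Ioc_rpow_mul_exp_neg_mul_le {a c : ℝ} (ha : 0 < a) (hc : 0 < c) (T : ℝ) :
    ∫ x in Ioc 0 T, x ^ (a - 1) * exp (-(c * x)) ≤ (1 / c) ^ a * Gamma a := by
  rw [← integral_rpow_mul_exp_neg_mul_Ioi ha hc]
  refine setIntegral_mono_set ?_ ?_ Ioc_subset_Ioi_self.eventuallyLE
  · simpa only [rpow_one, neg_mul] using
      integrableOn_rpow_mul_exp_neg_mul_rpow (s := a - 1) (p := 1) (by linarith) one_pos hc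
  · filter_upwards [ae_restrict_mem measurableSet_Ioi] with x (hx : 0 < x)
    positivity

lemma exp_neg_mul_two_mul_sub_sub (l t u v : ℝ) :
    exp (-l * (2 * t - u - v)) = exp (-(2 * l * (t - v))) * exp (-(l * (v - u))) := by
  rw [← exp_add]; ring_nf

lemma setIntegral_exp_mul_rpow_sub_le_rpow {r l s t v : ℝ} (hr : -1 < r) (hl : 0 ≤ l)
    (hsv : s ≤ v) (hvt : v ≤ t) :
    ∫ u in Ioo s v, exp (-l * (2 * t - u - v)) * (v - u) ^ r ≤ (v - s) ^ (r + 1) / (r + 1) := by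
  rw [← setIntegral_Ioo_rpow_sub hr hsv]
  refine integral_mono_of_nonneg ?_ (integrableOn_Ioo_rpow_sub hr) ?_
  · filter_upwards [ae_restrict_mem measurableSet_Ioo] with u hu
    have : 0 ≤ v - u := by linarith [hu.2]
    positivity
  · filter_upwards [ae_restrict_mem measurableSet_Ioo] with u hu
    have hvu : 0 ≤ v - u := by linarith [hu.2]
    have hexp : exp (-l * (2 * t - u - v)) ≤ 1 :=
      exp_le_one_iff.mpr (by nlinarith [hu.2])
    simpa using mul_le_mul_of_nonneg_right hexp (rpow_nonneg hvu r)

lemma setIntegral_exp_mul_rpow_sub_le_gamma {r l s t v : ℝ} (hr : -1 < r) (hl : 0 < l)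
    (hsv : s ≤ v) :
    ∫ u in Ioo s v, exp (-l * (2 * t - u - v)) * (v - u) ^ r ≤
      exp (-(2 * l * (t - v))) * ((1 / l) ^ (r + 1) * Gamma (r + 1)) := by
  have hfactor : ∫ u in Ioo s v, exp (-l * (2 * t - u - v)) * (v - u) ^ r =
      exp (-(2 * l * (t - v))) * ∫ x in Ioc 0 (v - s), x ^ (r + 1 - 1) * exp (-(l * x)) := by
    rw [← setIntegral_Ioo_comp_sub_left (fun x => x ^ (r + 1 - 1) * exp (-(l * x))) hsv,
      ← integral_const_mul]
    refine setIntegral_congr_fun measurableSet_Ioo fun u _ => ?_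
    rw [exp_neg_mul_two_mul_sub_sub, add_sub_cancel_right]
    ring
  rw [hfactor]
  exact mul_le_mul_of_nonneg_left
    (setIntegral_Ioc_rpow_mul_exp_neg_mul_le (by linarith) hl _) (exp_pos _).le

lemma setIntegral_exp_mul_rpow_sub_nonneg (r l t : ℝ) {s v : ℝ} :
    0 ≤ ∫ u in Ioo s v, exp (-l * (2 * t - u - v)) * (v - u) ^ r :=
  setIntegral_nonneg measurableSet_Ioo fun u hu => by
    have : 0 ≤ v - u := by linarith [hu.2]
    positivity

lemma triangleExpKernelIntegral_nonneg (r l s t : ℝ) : 0 ≤ triangleExpKernelIntegral r l s t :=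
  setIntegral_nonneg measurableSet_Ioo fun _ _ => setIntegral_exp_mul_rpow_sub_nonneg r l t

lemma triangleExpKernelIntegral_le_rpow {r l s t : ℝ} (hr : -1 < r) (hl : 0 ≤ l) (hst : s ≤ t) :
    triangleExpKernelIntegral r l s t ≤ (t - s) ^ (r + 2) / ((r + 1) * (r + 2)) := by
  have hbound : IntegrableOn (fun v => (v - s) ^ (r + 1) / (r + 1)) (Ioo s t) := by
    have := (intervalIntegral.intervalIntegrable_rpow' (a := 0) (b := t - s)
      (by linarith : -1 < r + 1)).comp_sub_right s
    rw [zero_add, sub_add_cancel] at this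
    exact ((intervalIntegrable_iff_integrableOn_Ioo_of_le hst).mp this).div_const _
  have hvalue : ∫ v in Ioo s t, (v - s) ^ (r + 1) / (r + 1) =
      (t - s) ^ (r + 2) / ((r + 1) * (r + 2)) := by
    rw [integral_div, ← integral_Ioc_eq_integral_Ioo, ← intervalIntegral.integral_of_le hst,
      intervalIntegral.integral_comp_sub_right (· ^ (r + 1)), sub_self,
      integral_rpow (Or.inl (by linarith)), zero_rpow (by linarith), sub_zero,
      show r + 1 + 1 = r + 2 by ring, div_div, mul_comm (r + 2)]
  rw [← hvalue]
  refine integral_mono_of_nonneg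
    (.of_forall fun _ => setIntegral_exp_mul_rpow_sub_nonneg r l t) hbound ?_
  filter_upwards [ae_restrict_mem measurableSet_Ioo] with v hv
  exact setIntegral_exp_mul_rpow_sub_le_rpow hr hl hv.1.le hv.2.le

lemma triangleExpKernelIntegral_le_rpow_neg {r l s t : ℝ} (hr : -1 < r) (hl : 0 < l)
    (hst : s ≤ t) :
    triangleExpKernelIntegral r l s t ≤ Gamma (r + 1) / 2 * l ^ (-(r + 2)) := by
  set K := (1 / l) ^ (r + 1) * Gamma (r + 1)
  have hbound : IntegrableOn (fun v => exp (-(2 * l * (t - v))) * K) (Ioo s t) :=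
    ((by fun_prop : Continuous fun v => exp (-(2 * l * (t - v)))).integrableOn_Icc.mono_set
      Ioo_subset_Icc_self).mul_const K
  have hexp : ∫ v in Ioo s t, exp (-(2 * l * (t - v))) ≤ 1 / (2 * l) := by
    simpa [setIntegral_Ioo_comp_sub_left (fun x => exp (-(2 * l * x))) hst] using
      setIntegral_Ioc_rpow_mul_exp_neg_mul_le one_pos (by positivity : 0 < 2 * l) (t - s)
  have hK : 1 / (2 * l) * K = Gamma (r + 1) / 2 * l ^ (-(r + 2)) := by
    rw [show K = (1 / l) ^ (r + 1) * Gamma (r + 1) from rfl, one_div l, inv_rpow hl.le,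
      ← rpow_neg hl.le, show -(r + 2) = -(r + 1) + -1 by ring, rpow_add hl, rpow_neg_one]
    ring
  calc triangleExpKernelIntegral r l s t
      ≤ ∫ v in Ioo s t, exp (-(2 * l * (t - v))) * K := by
        refine integral_mono_of_nonneg
          (.of_forall fun _ => setIntegral_exp_mul_rpow_sub_nonneg r l t) hbound ?_
        filter_upwards [ae_restrict_mem measurableSet_Ioo] with v hv
        exact setIntegral_exp_mul_rpow_sub_le_gamma hr hl hv.1.le
    _ ≤ 1 / (2 * l) * K := by
        rw [integral_mul_const]
        exact mul_le_mul_of_nonneg_right hexp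
          (mul_nonneg (by positivity) (Gamma_pos_of_pos (by linarith)).le)
    _ = Gamma (r + 1) / 2 * l ^ (-(r + 2)) := hK

lemma le_rpow_mul_rpow_of_le_of_le {x a b θ : ℝ} (hx : 0 ≤ x) (ha : x ≤ a) (hb : x ≤ b)
    (hθ₀ : 0 ≤ θ) (hθ₁ : θ ≤ 1) : x ≤ a ^ (1 - θ) * b ^ θ :=
  calc x = x ^ (1 - θ) * x ^ θ := by rw [← rpow_add' hx (by norm_num), sub_add_cancel, rpow_one]
    _ ≤ a ^ (1 - θ) * b ^ θ :=
      mul_le_mul (rpow_le_rpow hx ha (by linarith)) (rpow_le_rpow hx hb hθ₀)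
        (rpow_nonneg hx θ) (rpow_nonneg (hx.trans ha) _)

lemma rpow_mul_le_of_le_mul_rpow_of_le_mul_rpow_neg {x M T l p q : ℝ} (hM : 0 ≤ M)
    (hT : 0 ≤ T) (hl : 0 < l) (hp : 0 < p) (hq₀ : 0 ≤ q) (hqp : q ≤ p) (hx : 0 ≤ x)
    (hxT : x ≤ M * T ^ p) (hxl : x ≤ M * l ^ (-p)) : l ^ q * x ≤ M * T ^ (p - q) := by
  set θ := q / p
  have hpθ : p * θ = q := mul_div_cancel₀ q hp.ne'
  have hinterp := le_rpow_mul_rpow_of_le_of_le hx hxT hxl (div_nonneg hq₀ hp.le)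
    ((div_le_one hp).mpr hqp)
  have hsplit : (M * T ^ p) ^ (1 - θ) * (M * l ^ (-p)) ^ θ = M * T ^ (p - q) * l ^ (-q) := by
    rw [mul_rpow hM (rpow_nonneg hT _), mul_rpow hM (rpow_nonneg hl.le _), ← rpow_mul hT,
      ← rpow_mul hl.le, show p * (1 - θ) = p - q by rw [mul_sub, hpθ, mul_one],
      show -p * θ = -q by rw [neg_mul, hpθ], mul_mul_mul_comm, ← rpow_add' hM (by norm_num),
      sub_add_cancel, rpow_one, mul_assoc]
  calc l ^ q * x ≤ l ^ q * (M * T ^ (p - q) * l ^ (-q)) :=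
        mul_le_mul_of_nonneg_left (hinterp.trans_eq hsplit) (rpow_nonneg hl.le q)
    _ = M * T ^ (p - q) := by
        rw [mul_comm, mul_assoc, ← rpow_add hl, neg_add_cancel, rpow_zero, mul_one]

/-- For `H ∈ (1/2, 1)` and `α_H = H(2H-1)`, there is `C > 0` depending only
on `H` such that for every `δ ∈ [0, H]`, every `λ > 0` and all `0 ≤ s < t`,
`α_H λ^{2δ} ∫_s^t ∫_s^v e^{-λ(2t-u-v)} (v-u)^{2H-2} du dv ≤ C (t-s)^{2(H-δ)}`. -/
theorem stmt_4 (H : ℝ) (hH : H ∈ Set.Ioo (1/2 : ℝ) 1) :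
    ∃ C : ℝ, 0 < C ∧ ∀ δ : ℝ, δ ∈ Set.Icc 0 H → ∀ l : ℝ, 0 < l →
      ∀ s t : ℝ, 0 ≤ s → s < t →
      H * (2*H - 1) * l ^ (2 * δ) *
        (∫ v in Set.Ioo s t, ∫ u in Set.Ioo s v,
          Real.exp (-l * (2*t - u - v)) * (v - u) ^ (2*H - 2))
        ≤ C * (t - s) ^ (2 * (H - δ)) := by
  obtain ⟨hH₁, hH₂⟩ := hH
  have hαH : 0 < H * (2 * H - 1) := by nlinarith
  set M := max (1 / ((2 * H - 1) * (2 * H))) (Gamma (2 * H - 1) / 2)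
  have hM : 0 < M := lt_max_of_lt_right (half_pos (Gamma_pos_of_pos (by linarith)))
  refine ⟨H * (2 * H - 1) * M, mul_pos hαH hM, fun δ hδ l hl s t _ hst => ?_⟩
  have hr : -1 < 2 * H - 2 := by linarith
  have hIT := triangleExpKernelIntegral_le_rpow hr hl.le hst.le
  have hIl := triangleExpKernelIntegral_le_rpow_neg hr hl hst.le
  rw [show 2 * H - 2 + 1 = 2 * H - 1 by ring, show 2 * H - 2 + 2 = 2 * H by ring] at hIT hIl
  have hT : 0 ≤ t - s := sub_nonneg.mpr hst.le
  have hscaled : l ^ (2 * δ) * triangleExpKernelIntegral (2 * H - 2) l s t ≤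
      M * (t - s) ^ (2 * H - 2 * δ) :=
    rpow_mul_le_of_le_mul_rpow_of_le_mul_rpow_neg hM.le hT hl (by linarith)
      (by linarith [hδ.1]) (by linarith [hδ.2]) (triangleExpKernelIntegral_nonneg _ _ _ _)
      (hIT.trans_eq (by ring) |>.trans <| mul_le_mul_of_nonneg_right (le_max_left _ _)
        (rpow_nonneg hT _))
      (hIl.trans <| mul_le_mul_of_nonneg_right (le_max_right _ _) (rpow_nonneg hl.le _))
  change _ * triangleExpKernelIntegral (2 * H - 2) l s t ≤ _
  rw [mul_assoc _ (l ^ _), mul_assoc _ M, mul_sub 2 H δ]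
  exact mul_le_mul_of_nonneg_left hscaled hαH.le
end

section
/- Let H ∈ (1/2, 1), β ∈ (1−2H, 1], set α_H = H(2H−1) and φ(y) = α_H |y|^{2H−2} for y ≠ 0. Let (λ_i)_{i≥1} be a nondecreasing sequence of positive real numbers and let (a_i)_{i≥1} be a sequence of real numbers with Σ_{i≥1} λ_i^{β−1} a_i² < ∞. Then there exists a constant C > 0, depending only on H, such that for every N ∈ ℕ and every t > 0, one has ∫₀^t ∫₀^t ( Σ_{i≥N+1} e^{−λ_i(2t−u−v)} a_i² ) φ(u−v) du dv ≤ C λ_{N+1}^{−(2H+β−1)} Σ_{i≥1} λ_i^{β−1} a_i². -/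
open MeasureTheory Set Real

/-! By Tonelli, the double integral of the series is at most the series of the double integrals
of its terms. On the square `(0, t)²` one has `2t - u - v ≥ ((t - u) + |u - v|) / 2`, so the `i`-th
integrand is dominated by `e^{-λ(t-u)/2}` times a translate of the integrable kernel
`e^{-λ|z|/2} |z|^{2H-2}`, whose integral over `ℝ` is a Gamma value. This bounds the `i`-th term by
`C_H a_i² λ_i^{-2H}`, and `λ_i^{-2H} ≤ λ_{N+1}^{-(2H+β-1)} λ_i^{β-1}` for `i ≥ N + 1`. -/

theorem enorm_integral_integral_tsum_le {ι α β E : Type*} [Countable ι]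
    [MeasurableSpace α] [MeasurableSpace β] [NormedAddCommGroup E] [NormedSpace ℝ E]
    [MeasurableSpace E] [OpensMeasurableSpace E] {μ : Measure α} {ν : Measure β} [SFinite ν]
    {g : ι → α → β → E} (hg : ∀ i, Measurable (Function.uncurry (g i))) :
    ‖∫ x, ∫ y, ∑' i, g i x y ∂ν ∂μ‖ₑ ≤ ∑' i, ∫⁻ x, ∫⁻ y, ‖g i x y‖ₑ ∂ν ∂μ :=
  calc ‖∫ x, ∫ y, ∑' i, g i x y ∂ν ∂μ‖ₑ
      ≤ ∫⁻ x, ‖∫ y, ∑' i, g i x y ∂ν‖ₑ ∂μ := enorm_integral_le_lintegral_enorm _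
    _ ≤ ∫⁻ x, ∫⁻ y, ‖∑' i, g i x y‖ₑ ∂ν ∂μ :=
        lintegral_mono fun _ => enorm_integral_le_lintegral_enorm _
    _ ≤ ∫⁻ x, ∫⁻ y, ∑' i, ‖g i x y‖ₑ ∂ν ∂μ :=
        lintegral_mono fun _ => lintegral_mono fun _ => enorm_tsum_le_tsum_enorm
    _ = ∑' i, ∫⁻ x, ∫⁻ y, ‖g i x y‖ₑ ∂ν ∂μ := by
        rw [← lintegral_tsum fun i =>
          (Measurable.lintegral_prod_right (f := fun x y => ‖g i x y‖ₑ) (hg i).enorm).aemeasurable]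
        refine lintegral_congr fun x => lintegral_tsum fun i => ?_
        exact ((hg i).comp measurable_prodMk_left).enorm.aemeasurable

theorem norm_integral_integral_tsum_le {ι α β E : Type*} [Countable ι]
    [MeasurableSpace α] [MeasurableSpace β] [NormedAddCommGroup E] [NormedSpace ℝ E]
    [MeasurableSpace E] [OpensMeasurableSpace E] {μ : Measure α} {ν : Measure β} [SFinite ν]
    {g : ι → α → β → E} (hg : ∀ i, Measurable (Function.uncurry (g i)))
    {b : ι → ℝ} (hb0 : ∀ i, 0 ≤ b i) (hb : Summable b)
    (hgb : ∀ i, ∫⁻ x, ∫⁻ y, ‖g i x y‖ₑ ∂ν ∂μ ≤ ENNReal.ofReal (b i)) :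
    ‖∫ x, ∫ y, ∑' i, g i x y ∂ν ∂μ‖ ≤ ∑' i, b i := by
  have h := (enorm_integral_integral_tsum_le hg).trans <|
    (ENNReal.tsum_le_tsum hgb).trans_eq (ENNReal.ofReal_tsum_of_nonneg hb0 hb).symm
  rwa [← ofReal_norm, ENNReal.ofReal_le_ofReal_iff (tsum_nonneg hb0)] at h

theorem lintegral_comp_abs (f : ℝ → ENNReal) :
    ∫⁻ x, f |x| = 2 * ∫⁻ x in Ioi 0, f x := by
  have hpos : ∫⁻ x in Ioi 0, f |x| = ∫⁻ x in Ioi 0, f x :=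
    setLIntegral_congr_fun measurableSet_Ioi fun x hx => by rw [abs_of_pos hx]
  have hneg : ∫⁻ x in Iic 0, f |x| = ∫⁻ x in Ioi 0, f |x| := by
    rw [Measure.restrict_congr_set Ioi_ae_eq_Ici, ← lintegral_indicator measurableSet_Iic,
      ← lintegral_indicator measurableSet_Ici, ← lintegral_neg_eq_self]
    congr with x
    simp [indicator, abs_neg]
  rw [← lintegral_add_compl _ measurableSet_Ioi, compl_Ioi, hneg, hpos, two_mul]

theorem integral_Ioi_exp_neg_mul_mul_rpow {c d : ℝ} (hc : 0 < c) (hd : -1 < d) :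
    ∫ x in Ioi 0, exp (-(c * x)) * x ^ d = Gamma (d + 1) * c ^ (-(d + 1)) := by
  have h := integral_rpow_mul_exp_neg_mul_Ioi (a := d + 1) (by linarith) hc
  rw [add_sub_cancel_right] at h
  simp_rw [mul_comm (exp _)]
  rw [h, one_div, inv_rpow hc.le, ← rpow_neg hc.le, mul_comm]

theorem lintegral_exp_neg_mul_abs_mul_abs_rpow {c d : ℝ} (hc : 0 < c) (hd : -1 < d) :
    ∫⁻ z, ENNReal.ofReal (exp (-(c * |z|)) * |z| ^ d)
      = ENNReal.ofReal (2 * Gamma (d + 1) * c ^ (-(d + 1))) := by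
  have hint : IntegrableOn (fun x => exp (-(c * x)) * x ^ d) (Ioi 0) := by
    refine (integrableOn_rpow_mul_exp_neg_mul_rpow hd one_pos hc).congr_fun
      (fun x _ => ?_) measurableSet_Ioi
    simp only [rpow_one, neg_mul, mul_comm (x ^ d)]
  rw [lintegral_comp_abs (fun z => ENNReal.ofReal (exp (-(c * z)) * z ^ d)),
    ← ofReal_integral_eq_lintegral_ofReal hint, integral_Ioi_exp_neg_mul_mul_rpow hc hd,
    ← ENNReal.ofReal_ofNat, ← ENNReal.ofReal_mul zero_le_two, mul_assoc]
  filter_upwards [ae_restrict_mem measurableSet_Ioi] with x hx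
  exact mul_nonneg (exp_pos _).le (rpow_nonneg (le_of_lt hx) _)

theorem lintegral_Iic_exp_neg_mul_sub {c : ℝ} (hc : 0 < c) (t : ℝ) :
    ∫⁻ u in Iic t, ENNReal.ofReal (exp (-(c * (t - u)))) = ENNReal.ofReal c⁻¹ := by
  have h : ∀ u, exp (-(c * (t - u))) = exp (-(c * t)) * exp (c * u) := fun u => by
    rw [← exp_add]; ring_nf
  simp_rw [h]
  rw [← ofReal_integral_eq_lintegral_ofReal ((integrableOn_exp_mul_Iic hc t).const_mul _)
    (Filter.Eventually.of_forall fun u => by positivity), integral_const_mul,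
    integral_exp_mul_Iic hc, mul_div, ← exp_add]
  simp

theorem exp_neg_mul_le_exp_mul_exp {m t u v : ℝ} (hm : 0 ≤ m) (hu : u ≤ t) (hv : v ≤ t) :
    exp (-m * (2 * t - u - v)) ≤ exp (-(m / 2 * (t - u))) * exp (-(m / 2 * |u - v|)) := by
  have h : (t - u) + |u - v| ≤ 2 * (2 * t - u - v) := by
    cases abs_cases (u - v) <;> linarith
  rw [← exp_add]
  exact exp_le_exp.2 (by nlinarith)

theorem lintegral_lintegral_exp_mul_abs_rpow_le {m d : ℝ} (hm : 0 < m) (hd : -1 < d) (t : ℝ) :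
    ∫⁻ u in Ioo 0 t, ∫⁻ v in Ioo 0 t, ENNReal.ofReal (exp (-m * (2 * t - u - v)) * |u - v| ^ d)
      ≤ ENNReal.ofReal (2 * Gamma (d + 1) * (m / 2) ^ (-(d + 2))) := by
  set c := m / 2
  have hc : 0 < c := half_pos hm
  set K := fun z : ℝ => ENNReal.ofReal (exp (-(c * |z|)) * |z| ^ d)
  calc _ ≤ ∫⁻ u in Ioo 0 t, ∫⁻ v in Ioo 0 t,
          ENNReal.ofReal (exp (-(c * (t - u)))) * K (u - v) := by
        refine setLIntegral_mono' measurableSet_Ioo fun u hu =>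
          setLIntegral_mono' measurableSet_Ioo fun v hv => ?_
        rw [← ENNReal.ofReal_mul (exp_pos _).le, ← mul_assoc]
        exact ENNReal.ofReal_le_ofReal <| mul_le_mul_of_nonneg_right
          (exp_neg_mul_le_exp_mul_exp hm.le hu.2.le hv.2.le) (rpow_nonneg (abs_nonneg _) _)
    _ ≤ ∫⁻ u in Ioo 0 t, ENNReal.ofReal (exp (-(c * (t - u)))) * ∫⁻ z, K z := by
        refine lintegral_mono fun u => ?_
        rw [lintegral_const_mul' _ _ ENNReal.ofReal_ne_top, ← lintegral_sub_left_eq_self K u]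
        gcongr
        exact Measure.restrict_le_self
    _ ≤ ENNReal.ofReal c⁻¹ * ENNReal.ofReal (2 * Gamma (d + 1) * c ^ (-(d + 1))) := by
        rw [lintegral_mul_const' _ _ (by simp [K, lintegral_exp_neg_mul_abs_mul_abs_rpow hc hd]),
          lintegral_exp_neg_mul_abs_mul_abs_rpow hc hd, ← lintegral_Iic_exp_neg_mul_sub hc t]
        gcongr
        exact fun u hu => mem_Iic.2 hu.2.le
    _ = ENNReal.ofReal (2 * Gamma (d + 1) * c ^ (-(d + 2))) := by
        rw [← ENNReal.ofReal_mul (inv_nonneg.2 hc.le), show -(d + 2) = -1 + -(d + 1) by ring,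
          rpow_add hc, rpow_neg_one]
        ring_nf

theorem rpow_sub_le_rpow_neg_mul_rpow {μ m θ : ℝ} (hμ : 0 < μ) (hμm : μ ≤ m) (hθ : 0 ≤ θ)
    (r : ℝ) : m ^ (r - θ) ≤ μ ^ (-θ) * m ^ r := by
  have hm : 0 < m := hμ.trans_le hμm
  rw [rpow_sub hm, div_eq_mul_inv, mul_comm, ← rpow_neg hm.le]
  exact mul_le_mul_of_nonneg_right (rpow_le_rpow_of_nonpos hμ hμm (neg_nonpos.2 hθ))
    (rpow_nonneg hm.le _)

theorem lintegral_lintegral_eigenmode_le {H β μ m : ℝ} (hH : 1 / 2 < H) (hθ : 0 ≤ 2 * H + β - 1)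
    (hμ : 0 < μ) (hμm : μ ≤ m) (b t : ℝ) :
    ∫⁻ u in Ioo 0 t, ∫⁻ v in Ioo 0 t,
        ‖exp (-m * (2 * t - u - v)) * b ^ 2 * (H * (2 * H - 1) * |u - v| ^ (2 * H - 2))‖ₑ
      ≤ ENNReal.ofReal (H * (2 * H - 1) * (2 * Gamma (2 * H - 1) * 2 ^ (2 * H)) *
          μ ^ (-(2 * H + β - 1)) * (m ^ (β - 1) * b ^ 2)) := by
  have hm : 0 < m := hμ.trans_le hμm
  have hα : 0 ≤ H * (2 * H - 1) := by nlinarith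
  have hsplit : ∀ u v : ℝ,
      ‖exp (-m * (2 * t - u - v)) * b ^ 2 * (H * (2 * H - 1) * |u - v| ^ (2 * H - 2))‖ₑ
        = ENNReal.ofReal (b ^ 2 * (H * (2 * H - 1))) *
            ENNReal.ofReal (exp (-m * (2 * t - u - v)) * |u - v| ^ (2 * H - 2)) := by
    intro u v
    rw [← ENNReal.ofReal_mul (by positivity), Real.enorm_of_nonneg (by positivity)]
    ring_nf
  simp_rw [hsplit, lintegral_const_mul' _ _ ENNReal.ofReal_ne_top]
  grw [lintegral_lintegral_exp_mul_abs_rpow_le hm (d := 2 * H - 2) (by linarith) t,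
    ← ENNReal.ofReal_mul (by positivity)]
  have hΓ : 0 ≤ Gamma (2 * H - 1) := (Gamma_pos_of_pos (by linarith)).le
  have hpow : (m / 2) ^ (-(2 * H)) = 2 ^ (2 * H) * m ^ ((β - 1) - (2 * H + β - 1)) := by
    rw [div_rpow hm.le zero_le_two, rpow_neg (by positivity), rpow_neg zero_le_two,
      show (β - 1) - (2 * H + β - 1) = -(2 * H) by ring, rpow_neg hm.le]
    field_simp
  rw [show 2 * H - 2 + 1 = 2 * H - 1 by ring, show -(2 * H - 2 + 2) = -(2 * H) by ring, hpow]
  refine ENNReal.ofReal_le_ofReal ?_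
  calc b ^ 2 * (H * (2 * H - 1)) * (2 * Gamma (2 * H - 1) *
        (2 ^ (2 * H) * m ^ ((β - 1) - (2 * H + β - 1))))
      = H * (2 * H - 1) * (2 * Gamma (2 * H - 1) * 2 ^ (2 * H)) * b ^ 2 *
          m ^ ((β - 1) - (2 * H + β - 1)) := by ring
    _ ≤ H * (2 * H - 1) * (2 * Gamma (2 * H - 1) * 2 ^ (2 * H)) * b ^ 2 *
          (μ ^ (-(2 * H + β - 1)) * m ^ (β - 1)) := by
        gcongr
        exact rpow_sub_le_rpow_neg_mul_rpow hμ hμm hθ (β - 1)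
    _ = _ := by ring

/-- For `H ∈ (1/2, 1)`, `β ∈ (1-2H, 1]`, `φ(y) = H(2H-1)|y|^{2H-2}`,
a nondecreasing sequence of positive eigenvalues `(λ_i)` and real coefficients `(a_i)`
with `Σ_i λ_i^{β-1} a_i² < ∞`, there is `C > 0` depending only on `H` such that for
every `N` and every `t > 0`,
`∫₀^t ∫₀^t (Σ_{i ≥ N+1} e^{-λ_i(2t-u-v)} a_i²) φ(u-v) du dv
  ≤ C λ_{N+1}^{-(2H+β-1)} Σ_i λ_i^{β-1} a_i²`. -/
theorem stmt_5 (H : ℝ) (hH : H ∈ Set.Ioo (1/2 : ℝ) 1)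
    (β : ℝ) (hβ : β ∈ Set.Ioc (1 - 2*H) 1)
    (lam : ℕ → ℝ) (hlam : ∀ i, 0 < lam i) (hmono : Monotone lam)
    (a : ℕ → ℝ) (ha : Summable (fun i => lam i ^ (β - 1) * a i ^ 2)) :
    ∃ C : ℝ, 0 < C ∧ ∀ N : ℕ, ∀ t : ℝ, 0 < t →
      (∫ u in Set.Ioo (0:ℝ) t, ∫ v in Set.Ioo (0:ℝ) t,
          (∑' i : ℕ, if N + 1 ≤ i then Real.exp (-lam i * (2*t - u - v)) * a i ^ 2 else 0) *
            (H * (2*H - 1) * |u - v| ^ (2*H - 2)))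
        ≤ C * lam (N + 1) ^ (-(2*H + β - 1)) * ∑' i : ℕ, lam i ^ (β - 1) * a i ^ 2 := by
  have hθ : 0 ≤ 2 * H + β - 1 := by linarith [hβ.1]
  have h2H : 0 < 2 * H - 1 := by linarith [hH.1]
  set C := H * (2 * H - 1) * (2 * Gamma (2 * H - 1) * 2 ^ (2 * H))
  have hC : 0 < C := mul_pos (mul_pos (by linarith) h2H)
    (mul_pos (mul_pos two_pos (Gamma_pos_of_pos h2H)) (by positivity))
  refine ⟨C, hC, fun N t _ => ?_⟩
  have hb0 : ∀ i, 0 ≤ C * lam (N + 1) ^ (-(2 * H + β - 1)) * (lam i ^ (β - 1) * a i ^ 2) :=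
    fun i => by have := hlam i; have := hlam (N + 1); positivity
  rw [← tsum_mul_left]
  simp_rw [← tsum_mul_right]
  refine (Real.le_norm_self _).trans
    (norm_integral_integral_tsum_le (fun i => ?_) hb0 (ha.mul_left _) (fun i => ?_))
  · split_ifs <;> fun_prop
  · split_ifs with hi
    · exact lintegral_lintegral_eigenmode_le hH.1 hθ (hlam _) (hmono hi) (a i) t
    · simp
end

section
/- There exist constants C > 0 and c ∈ (0, 1) such that for every z ∈ [0, 1] and every integer j ≥ 1, one has |(1+z)^{−j} − e^{−jz}| ≤ C j z² e^{−c(j−1)z}. -/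
open Real

lemma my_pow_sub_pow_le {a b : ℝ} (hb : 0 ≤ b) (hba : b ≤ a) (n : ℕ) :
    a ^ n - b ^ n ≤ (n : ℝ) * a ^ (n - 1) * (a - b) := by
  have ha : 0 ≤ a := hb.trans hba
  rw [← geom_sum₂_mul]
  have hsum : (∑ i ∈ Finset.range n, a ^ i * b ^ (n - 1 - i)) ≤ (n : ℝ) * a ^ (n - 1) := by
    calc (∑ i ∈ Finset.range n, a ^ i * b ^ (n - 1 - i))
        ≤ ∑ i ∈ Finset.range n, a ^ (n - 1) := by
          apply Finset.sum_le_sum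
          intro i hi
          have hi' : i < n := Finset.mem_range.mp hi
          calc a ^ i * b ^ (n - 1 - i) ≤ a ^ i * a ^ (n - 1 - i) := by
                exact mul_le_mul_of_nonneg_left (pow_le_pow_left₀ hb hba _) (pow_nonneg ha _)
            _ = a ^ (i + (n - 1 - i)) := (pow_add a i _).symm
            _ = a ^ (n - 1) := by congr 1; omega
      _ = (n : ℝ) * a ^ (n - 1) := by
          rw [Finset.sum_const, Finset.card_range, nsmul_eq_mul]
  exact mul_le_mul_of_nonneg_right hsum (by linarith)

/-- There exist `C > 0` and `c ∈ (0,1)` such that for every `z ∈ [0,1]`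
and every integer `j ≥ 1`, `|(1+z)^{-j} - e^{-jz}| ≤ C j z² e^{-c(j-1)z}`. -/
theorem stmt_6 :
    ∃ C : ℝ, 0 < C ∧ ∃ c : ℝ, c ∈ Set.Ioo (0:ℝ) 1 ∧
      ∀ z : ℝ, z ∈ Set.Icc (0:ℝ) 1 → ∀ j : ℕ, 1 ≤ j →
        |((1 + z)⁻¹) ^ j - Real.exp (-(j : ℝ) * z)|
          ≤ C * j * z ^ 2 * Real.exp (-c * ((j : ℝ) - 1) * z) := by
  refine ⟨1, one_pos, 1/2, ⟨by norm_num, by norm_num⟩, ?_⟩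
  rintro z ⟨hz0, hz1⟩ j hj
  set a : ℝ := (1 + z)⁻¹ with ha_def
  have h1z : (0:ℝ) < 1 + z := by linarith
  have hainv : (1 + z) * a = 1 := mul_inv_cancel₀ h1z.ne'
  have ha0 : 0 < a := inv_pos.mpr h1z
  -- exp(-jz) = (exp(-z))^j
  have hbj : Real.exp (-(j : ℝ) * z) = (Real.exp (-z)) ^ j := by
    rw [← Real.exp_nat_mul]; ring_nf
  have hexp1 : 1 + z ≤ Real.exp z := by linarith [Real.add_one_le_exp z]
  have hb0 : 0 < Real.exp (-z) := Real.exp_pos _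
  -- exp(-z) ≤ a
  have hba : Real.exp (-z) ≤ a := by
    rw [Real.exp_neg]
    exact inv_anti₀ h1z hexp1
  -- a - exp(-z) ≤ z^2
  have hdiff : a - Real.exp (-z) ≤ z ^ 2 := by
    have h1 : 1 - z ≤ Real.exp (-z) := by
      have := Real.add_one_le_exp (-z); linarith
    have h2 : a ≤ 1 - z + z ^ 2 := by
      nlinarith [sq_nonneg z, mul_pos h1z ha0]
    linarith
  -- a ≤ exp(-(1/2) z)
  have hdecay : a ≤ Real.exp (-(1/2) * z) := by
    have h1 : Real.exp (z/2) ≤ 1 + z := by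
      have h2 : 1 - z/2 ≤ Real.exp (-(z/2)) := by
        have := Real.add_one_le_exp (-(z/2)); linarith
      have h3 : Real.exp (z/2) * Real.exp (-(z/2)) = 1 := by
        rw [← Real.exp_add]; norm_num
      have h4 : 0 < Real.exp (z/2) := Real.exp_pos _
      nlinarith
    calc a ≤ (Real.exp (z/2))⁻¹ := inv_anti₀ (Real.exp_pos _) h1
      _ = Real.exp (-(1/2) * z) := by rw [← Real.exp_neg]; ring_nf
  -- a^(j-1) ≤ exp(-(1/2)(j-1)z)
  have hpow : a ^ (j - 1) ≤ Real.exp (-(1/2) * ((j:ℝ) - 1) * z) := by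
    have h1 : a ^ (j-1) ≤ (Real.exp (-(1/2) * z)) ^ (j-1) :=
      pow_le_pow_left₀ ha0.le hdecay _
    have h2 : (Real.exp (-(1/2) * z)) ^ (j-1) = Real.exp (-(1/2) * ((j:ℝ) - 1) * z) := by
      rw [← Real.exp_nat_mul]
      congr 1
      have : ((j - 1 : ℕ) : ℝ) = (j : ℝ) - 1 := by
        rw [Nat.cast_sub hj]; norm_num
      rw [this]; ring
    linarith
  have hnn : 0 ≤ a ^ j - Real.exp (-(j:ℝ) * z) := by
    rw [hbj]; exact sub_nonneg.mpr (pow_le_pow_left₀ hb0.le hba j)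
  rw [abs_of_nonneg hnn, hbj]
  calc a ^ j - (Real.exp (-z)) ^ j
      ≤ (j : ℝ) * a ^ (j - 1) * (a - Real.exp (-z)) :=
        my_pow_sub_pow_le hb0.le hba j
    _ ≤ (j : ℝ) * Real.exp (-(1/2) * ((j:ℝ) - 1) * z) * z ^ 2 := by
        have hj0 : (0:ℝ) ≤ (j : ℝ) := Nat.cast_nonneg j
        have := mul_le_mul (mul_le_mul_of_nonneg_left hpow hj0) hdiff
          (by linarith [hba]) (by positivity)
        linarith
    _ = 1 * (j:ℝ) * z ^ 2 * Real.exp (-(1/2) * ((j:ℝ) - 1) * z) := by ring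
end

section
/- Let 0 ≤ ν ≤ μ ≤ 2. Then there exists a constant C > 0, depending only on μ and ν, such that for every λ > 0, every τ > 0 and every integer m ≥ 1, one has |(1+τλ)^{−m} − e^{−mτλ}| ≤ C τ^{μ/2} (mτ)^{−(μ−ν)/2} λ^{ν/2}. -/
open Real

private lemma exp_half_le (x : ℝ) (hx0 : 0 ≤ x) (hx1 : x ≤ 1) :
    Real.exp (x / 2) ≤ 1 + x := by
  have h1 : 1 - x / 2 ≤ Real.exp (-(x / 2)) := by
    have := Real.add_one_le_exp (-(x / 2)); linarith
  have h3 : Real.exp (x / 2) * Real.exp (-(x / 2)) = 1 := by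
    rw [← Real.exp_add]; simp
  nlinarith [Real.exp_pos (x / 2), Real.exp_pos (-(x / 2)),
    mul_le_mul_of_nonneg_left h1 (Real.exp_pos (x / 2)).le]

private lemma pow_sub_pow_le' (a b : ℝ) (hb : 0 ≤ b) (hba : b ≤ a) :
    ∀ k : ℕ, a ^ (k + 1) - b ^ (k + 1) ≤ (k + 1 : ℝ) * (a - b) * a ^ k := by
  intro k
  induction k with
  | zero => simp
  | succ k ih =>
    have ha : 0 ≤ a := hb.trans hba
    have hbk : b ^ (k + 1) ≤ a ^ (k + 1) := pow_le_pow_left₀ hb hba _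
    have hak : 0 ≤ a ^ k := pow_nonneg ha k
    have e1 : a ^ (k + 2) - b ^ (k + 2)
        = a * (a ^ (k + 1) - b ^ (k + 1)) + (a - b) * b ^ (k + 1) := by ring
    have e2 : a * (a ^ (k + 1) - b ^ (k + 1)) ≤ a * ((k + 1 : ℝ) * (a - b) * a ^ k) :=
      mul_le_mul_of_nonneg_left ih ha
    have e3 : (a - b) * b ^ (k + 1) ≤ (a - b) * a ^ (k + 1) :=
      mul_le_mul_of_nonneg_left hbk (by linarith)
    have : a * ((k + 1 : ℝ) * (a - b) * a ^ k) = (k + 1 : ℝ) * (a - b) * a ^ (k + 1) := by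
      ring
    push_cast
    nlinarith [e1, e2, e3]

private lemma tail_bound (y : ℝ) (hy : 0 ≤ y) :
    (1 + y ^ 2) * Real.exp (-(y / 2)) ≤ 17 := by
  have h1 : 1 + y / 4 ≤ Real.exp (y / 4) := by
    have := Real.add_one_le_exp (y / 4); linarith
  have h2 : Real.exp (y / 4) * Real.exp (y / 4) = Real.exp (y / 2) := by
    rw [← Real.exp_add]; ring_nf
  have h3 : Real.exp (-(y / 2)) * Real.exp (y / 2) = 1 := by
    rw [← Real.exp_add]; simp
  have h4 : (1 + y / 4) * (1 + y / 4) ≤ Real.exp (y / 4) * Real.exp (y / 4) :=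
    mul_le_mul h1 h1 (by linarith) (Real.exp_pos _).le
  nlinarith [Real.exp_pos (-(y / 2)), Real.exp_pos (y / 2), sq_nonneg y]

private lemma core (α β : ℝ) (hα : 0 ≤ α) (hβ0 : 0 ≤ β) (hβ1 : β ≤ 1)
    (hαβ : α + β ≤ 1) (x : ℝ) (hx : 0 < x) (m : ℕ) (hm : 1 ≤ m) :
    ((1 + x)⁻¹) ^ m - Real.exp (-((m : ℝ) * x)) ≤ 17 * (m : ℝ) ^ (-α) * x ^ β := by
  have hm' : (1 : ℝ) ≤ (m : ℝ) := by exact_mod_cast hm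
  have hm0 : (0 : ℝ) < (m : ℝ) := by linarith
  have h1x : (0 : ℝ) < 1 + x := by linarith
  have hα1 : α ≤ 1 := by linarith
  have hmα : (0 : ℝ) < (m : ℝ) ^ (-α) := Real.rpow_pos_of_pos hm0 _
  have hxβ : (0 : ℝ) < x ^ β := Real.rpow_pos_of_pos hx _
  rcases le_or_gt x 1 with hx1 | hx1
  · -- small x
    set a : ℝ := (1 + x)⁻¹ with ha_def
    set b : ℝ := Real.exp (-x) with hb_def
    have ha0 : 0 < a := by positivity
    have hb0 : 0 < b := Real.exp_pos _
    have hba : b ≤ a := by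
      rw [hb_def, Real.exp_neg, ha_def]
      exact inv_anti₀ h1x (by have := Real.add_one_le_exp x; linarith)
    have hab : a - b ≤ x ^ 2 * a := by
      have hb1 : 1 - x ≤ b := by
        have := Real.add_one_le_exp (-x); rw [hb_def]; linarith
      have key : a - (1 - x) = x ^ 2 * a := by
        rw [ha_def]; field_simp; ring
      linarith
    obtain ⟨k, rfl⟩ : ∃ k, m = k + 1 := ⟨m - 1, (Nat.succ_pred_eq_of_pos hm).symm⟩
    have hD : a ^ (k + 1) - b ^ (k + 1) ≤ ((k : ℝ) + 1) * x ^ 2 * a ^ (k + 1) := by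
      have h := pow_sub_pow_le' a b hb0.le hba k
      have h2 : ((k : ℝ) + 1) * (a - b) * a ^ k ≤ ((k : ℝ) + 1) * (x ^ 2 * a) * a ^ k := by
        apply mul_le_mul_of_nonneg_right _ (pow_nonneg ha0.le k)
        exact mul_le_mul_of_nonneg_left hab (by positivity)
      calc a ^ (k + 1) - b ^ (k + 1) ≤ ((k : ℝ) + 1) * (a - b) * a ^ k := h
        _ ≤ ((k : ℝ) + 1) * (x ^ 2 * a) * a ^ k := h2
        _ = ((k : ℝ) + 1) * x ^ 2 * a ^ (k + 1) := by ring
    have ha_exp : a ≤ Real.exp (-(x / 2)) := by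
      rw [ha_def, Real.exp_neg]
      exact inv_anti₀ (Real.exp_pos _) (exp_half_le x hx.le hx1)
    have hpow_exp : a ^ (k + 1) ≤ Real.exp (-(((k : ℝ) + 1) * x / 2)) := by
      calc a ^ (k + 1) ≤ Real.exp (-(x / 2)) ^ (k + 1) := by
            exact pow_le_pow_left₀ ha0.le ha_exp _
        _ = Real.exp (-(((k : ℝ) + 1) * x / 2)) := by
            rw [← Real.exp_nat_mul]; push_cast; ring_nf
    -- now the rpow accounting
    set M : ℝ := (k : ℝ) + 1 with hM
    have hM1 : (1 : ℝ) ≤ M := by have : (0:ℝ) ≤ (k:ℝ) := Nat.cast_nonneg k; linarith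
    have hM0 : (0 : ℝ) < M := by linarith
    set y : ℝ := M * x with hy
    have hy0 : 0 < y := by positivity
    have main : M * x ^ 2 * Real.exp (-(y / 2)) ≤ 17 * M ^ (-α) * x ^ β := by
      have key : M ^ (1 + α) * x ^ (2 - β) * Real.exp (-(y / 2)) ≤ 17 := by
        have e1 : M ^ (1 + α) * x ^ (2 - β)
            = M ^ (α + β - 1) * y ^ (2 - β) := by
          rw [hy, Real.mul_rpow hM0.le hx.le, ← mul_assoc,
            ← Real.rpow_add hM0]
          ring_nf
        have e2 : M ^ (α + β - 1) ≤ 1 :=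
          Real.rpow_le_one_of_one_le_of_nonpos hM1 (by linarith)
        have e3 : y ^ (2 - β) ≤ 1 + y ^ 2 := by
          rcases le_or_gt y 1 with h | h
          · have := Real.rpow_le_one hy0.le h (by linarith : (0:ℝ) ≤ 2 - β)
            nlinarith [sq_nonneg y]
          · have h2 : y ^ (2 - β) ≤ y ^ (2 : ℝ) :=
              Real.rpow_le_rpow_of_exponent_le h.le (by linarith)
            rw [Real.rpow_two] at h2
            linarith
        have e4 := tail_bound y hy0.le
        have e5 : (0 : ℝ) ≤ y ^ (2 - β) := (Real.rpow_pos_of_pos hy0 _).le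
        calc M ^ (1 + α) * x ^ (2 - β) * Real.exp (-(y / 2))
            = M ^ (α + β - 1) * (y ^ (2 - β) * Real.exp (-(y / 2))) := by
              rw [e1]; ring
          _ ≤ 1 * (y ^ (2 - β) * Real.exp (-(y / 2))) := by
              apply mul_le_mul_of_nonneg_right e2; positivity
          _ = y ^ (2 - β) * Real.exp (-(y / 2)) := by ring
          _ ≤ (1 + y ^ 2) * Real.exp (-(y / 2)) := by
              exact mul_le_mul_of_nonneg_right e3 (Real.exp_pos _).le
          _ ≤ 17 := e4
      have split : M * x ^ 2 = (M ^ (-α) * x ^ β) * (M ^ (1 + α) * x ^ (2 - β)) := by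
        rw [show (M ^ (-α) * x ^ β) * (M ^ (1 + α) * x ^ (2 - β))
            = (M ^ (-α) * M ^ (1 + α)) * (x ^ β * x ^ (2 - β)) by ring,
          ← Real.rpow_add hM0, ← Real.rpow_add hx]
        norm_num
      calc M * x ^ 2 * Real.exp (-(y / 2))
          = (M ^ (-α) * x ^ β) * (M ^ (1 + α) * x ^ (2 - β) * Real.exp (-(y / 2))) := by
            rw [split]; ring
        _ ≤ (M ^ (-α) * x ^ β) * 17 := by
            exact mul_le_mul_of_nonneg_left key (by positivity)
        _ = 17 * M ^ (-α) * x ^ β := by ring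
    have hMcast : ((k + 1 : ℕ) : ℝ) = M := by rw [hM]; push_cast; ring
    calc ((1 + x)⁻¹) ^ (k + 1) - Real.exp (-(((k + 1 : ℕ) : ℝ) * x))
        = a ^ (k + 1) - b ^ (k + 1) := by
          rw [ha_def, hb_def, ← Real.exp_nat_mul]
          push_cast; ring_nf
      _ ≤ M * x ^ 2 * a ^ (k + 1) := hD
      _ ≤ M * x ^ 2 * Real.exp (-(y / 2)) := by
          exact mul_le_mul_of_nonneg_left hpow_exp (by positivity)
      _ ≤ 17 * M ^ (-α) * x ^ β := main
      _ = 17 * (((k + 1 : ℕ) : ℝ)) ^ (-α) * x ^ β := by rw [hMcast]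
  · -- large x
    have hmx1 : (1 : ℝ) ≤ (m : ℝ) * x := by nlinarith
    have hmx0 : (0 : ℝ) < (m : ℝ) * x := by linarith
    have hbern : 1 + (m : ℝ) * x ≤ (1 + x) ^ m := by
      have := one_add_mul_le_pow (by linarith : (-2 : ℝ) ≤ x) m
      linarith
    have hD1 : ((1 + x)⁻¹) ^ m ≤ ((m : ℝ) * x)⁻¹ := by
      rw [inv_pow]
      exact inv_anti₀ hmx0 (by linarith)
    have hD : ((1 + x)⁻¹) ^ m - Real.exp (-((m : ℝ) * x)) ≤ ((m : ℝ) * x)⁻¹ := by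
      have := (Real.exp_pos (-((m : ℝ) * x))).le
      linarith
    have step1 : ((m : ℝ) * x)⁻¹ ≤ ((m : ℝ) * x) ^ (-α) := by
      rw [← Real.rpow_neg_one]
      exact Real.rpow_le_rpow_of_exponent_le hmx1 (by linarith)
    have step2 : ((m : ℝ) * x) ^ (-α) = (m : ℝ) ^ (-α) * x ^ (-α) :=
      Real.mul_rpow hm0.le hx.le
    have step3 : x ^ (-α) ≤ x ^ β :=
      Real.rpow_le_rpow_of_exponent_le hx1.le (by linarith)
    calc ((1 + x)⁻¹) ^ m - Real.exp (-((m : ℝ) * x)) ≤ ((m : ℝ) * x)⁻¹ := hD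
      _ ≤ ((m : ℝ) * x) ^ (-α) := step1
      _ = (m : ℝ) ^ (-α) * x ^ (-α) := step2
      _ ≤ (m : ℝ) ^ (-α) * x ^ β := by exact mul_le_mul_of_nonneg_left step3 hmα.le
      _ ≤ 17 * (m : ℝ) ^ (-α) * x ^ β := by nlinarith

/-- For `0 ≤ ν ≤ μ ≤ 2` there is `C > 0` depending only on `μ, ν` such
that for every `λ > 0`, `τ > 0` and integer `m ≥ 1`,
`|(1+τλ)^{-m} - e^{-mτλ}| ≤ C τ^{μ/2} (mτ)^{-(μ-ν)/2} λ^{ν/2}`. -/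
theorem stmt_7 (μ ν : ℝ) (hν : 0 ≤ ν) (hνμ : ν ≤ μ) (hμ : μ ≤ 2) :
    ∃ C : ℝ, 0 < C ∧ ∀ l : ℝ, 0 < l → ∀ τ : ℝ, 0 < τ → ∀ m : ℕ, 1 ≤ m →
      |((1 + τ * l)⁻¹) ^ m - Real.exp (-(m : ℝ) * τ * l)|
        ≤ C * τ ^ (μ / 2) * ((m : ℝ) * τ) ^ (-(μ - ν) / 2) * l ^ (ν / 2) := by
  refine ⟨17, by norm_num, fun l hl τ hτ m hm => ?_⟩
  set α : ℝ := (μ - ν) / 2 with hα_def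
  set β : ℝ := ν / 2 with hβ_def
  have hα : 0 ≤ α := by rw [hα_def]; linarith
  have hβ0 : 0 ≤ β := by rw [hβ_def]; linarith
  have hβ1 : β ≤ 1 := by rw [hβ_def]; linarith
  have hαβ : α + β ≤ 1 := by rw [hα_def, hβ_def]; linarith
  have hm0 : (0 : ℝ) < (m : ℝ) := by exact_mod_cast Nat.lt_of_lt_of_le Nat.zero_lt_one hm
  set x : ℝ := τ * l with hx_def
  have hx : 0 < x := mul_pos hτ hl
  -- remove absolute value
  have habs : Real.exp (-(m : ℝ) * τ * l) ≤ ((1 + τ * l)⁻¹) ^ m := by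
    have h1 : Real.exp (-(m : ℝ) * τ * l) = (Real.exp (-(τ * l))) ^ m := by
      rw [← Real.exp_nat_mul]; ring_nf
    have h2 : Real.exp (-(τ * l)) ≤ (1 + τ * l)⁻¹ := by
      rw [Real.exp_neg]
      exact inv_anti₀ (by positivity)
        (by have := Real.add_one_le_exp (τ * l); linarith)
    rw [h1]
    exact pow_le_pow_left₀ (Real.exp_pos _).le h2 m
  rw [abs_of_nonneg (by linarith)]
  have hcore := core α β hα hβ0 hβ1 hαβ x hx m hm
  -- rewrite RHS
  have hRHS : (17 : ℝ) * τ ^ (μ / 2) * ((m : ℝ) * τ) ^ (-(μ - ν) / 2) * l ^ (ν / 2)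
      = 17 * (m : ℝ) ^ (-α) * x ^ β := by
    have e1 : ((m : ℝ) * τ) ^ (-(μ - ν) / 2) = (m : ℝ) ^ (-α) * τ ^ (-α) := by
      rw [show -(μ - ν) / 2 = -α by rw [hα_def]; ring,
        Real.mul_rpow hm0.le hτ.le]
    have e2 : x ^ β = τ ^ β * l ^ β := by
      rw [hx_def, Real.mul_rpow hτ.le hl.le]
    have e3 : τ ^ (μ / 2) * τ ^ (-α) = τ ^ β := by
      rw [← Real.rpow_add hτ]
      congr 1
      rw [hα_def, hβ_def]; ring
    rw [e1, e2]
    rw [show l ^ (ν / 2) = l ^ β by rw [hβ_def]]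
    calc 17 * τ ^ (μ / 2) * ((m : ℝ) ^ (-α) * τ ^ (-α)) * l ^ β
        = 17 * (m : ℝ) ^ (-α) * ((τ ^ (μ / 2) * τ ^ (-α)) * l ^ β) := by ring
      _ = 17 * (m : ℝ) ^ (-α) * (τ ^ β * l ^ β) := by rw [e3]
  rw [hRHS]
  calc ((1 + τ * l)⁻¹) ^ m - Real.exp (-(m : ℝ) * τ * l)
      = ((1 + x)⁻¹) ^ m - Real.exp (-((m : ℝ) * x)) := by
        rw [hx_def]; ring_nf
    _ ≤ 17 * (m : ℝ) ^ (-α) * x ^ β := hcore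
end

section
/- Let H ∈ (1/2, 1) and set α_H = H(2H−1). Then for all integers i, j ≥ 1 with i ≠ j, one has ∫₀^1 ∫₀^1 α_H |u + i − v − j|^{2H−2} du dv ≤ (1/2) max(i, j)^{2H−1}. -/
/-!
Reflecting both variables (`u ↦ 1 - u`, `v ↦ 1 - v`) shows that the integral only depends on
`d = |i - j|`. For `d ≥ 1` the integrand has no singularity inside the square, so two explicit
integrations give the second difference `((d + 1)^{2H} - 2 d^{2H} + (d - 1)^{2H}) / 2`, which for
`d = 1` is `2^{2H-1} - 1 ≤ 2^{2H-1} / 2`. For `d ≥ 2` the integrand is at most `α_H` because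
`|u + d - v| ≥ 1`, and `α_H ≤ 3^{2H-1} / 2` by `3^s ≥ 1 + s log 3`. Since `max(i, j) ≥ d + 1`,
both cases give the claim.
-/

open MeasureTheory Set Real

theorem integral_Ioo_zero_one_comp_one_sub (f : ℝ → ℝ) :
    ∫ x in Ioo (0:ℝ) 1, f (1 - x) = ∫ x in Ioo (0:ℝ) 1, f x := by
  simp only [← integral_Ioc_eq_integral_Ioo, ← intervalIntegral.integral_of_le zero_le_one,
    intervalIntegral.integral_comp_sub_left f 1, sub_self, sub_zero]

theorem integral_Ioo_zero_one_add_rpow {r : ℝ} (hr : -1 < r) (a : ℝ) :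
    ∫ x in Ioo (0:ℝ) 1, (a + x) ^ r = ((a + 1) ^ (r + 1) - a ^ (r + 1)) / (r + 1) := by
  rw [← integral_Ioc_eq_integral_Ioo, ← intervalIntegral.integral_of_le zero_le_one,
    intervalIntegral.integral_comp_add_left (· ^ r) a, integral_rpow (Or.inl hr), add_zero]

theorem integral_Ioo_zero_one_sub_rpow {r : ℝ} (hr : -1 < r) (b : ℝ) :
    ∫ x in Ioo (0:ℝ) 1, (b - x) ^ r = (b ^ (r + 1) - (b - 1) ^ (r + 1)) / (r + 1) := by
  rw [← integral_Ioo_zero_one_comp_one_sub]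
  simp_rw [show ∀ x : ℝ, b - (1 - x) = (b - 1) + x by intro x; ring]
  rw [integral_Ioo_zero_one_add_rpow hr, sub_add_cancel]

theorem mul_two_mul_sub_one_le_three_rpow {H : ℝ} (hH : H ∈ Icc (1/2 : ℝ) 1) :
    H * (2 * H - 1) ≤ 3 ^ (2 * H - 1) / 2 := by
  have hexp : 1 + (2 * H - 1) * log 3 ≤ 3 ^ (2 * H - 1) := by
    rw [rpow_def_of_pos (by norm_num), mul_comm, add_comm]
    exact add_one_le_exp _
  nlinarith [hH.1, hH.2, log_three_gt_d9, mul_nonneg (sub_nonneg.2 hH.1) (sub_nonneg.2 hH.2)]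

/-- The covariance of the unit increments of fractional Brownian motion with Hurst index `H`
on `[j, j + 1]` and `[i, i + 1]`, where `d = i - j`. -/
noncomputable def fbmBlockCov (H d : ℝ) : ℝ :=
  ∫ u in Ioo (0:ℝ) 1, ∫ v in Ioo (0:ℝ) 1, H * (2 * H - 1) * |u + d - v| ^ (2 * H - 2)

theorem fbmBlockCov_neg (H d : ℝ) : fbmBlockCov H (-d) = fbmBlockCov H d := by
  unfold fbmBlockCov
  rw [← integral_Ioo_zero_one_comp_one_sub]
  congr! 2 with u
  rw [← integral_Ioo_zero_one_comp_one_sub]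
  congr! 2 with v
  rw [← abs_neg]
  ring_nf

theorem fbmBlockCov_of_one_le {H d : ℝ} (hH : 1/2 < H) (hd : 1 ≤ d) :
    fbmBlockCov H d = ((d + 1) ^ (2 * H) - 2 * d ^ (2 * H) + (d - 1) ^ (2 * H)) / 2 := by
  have hs : 0 < 2 * H - 1 := by linarith
  have hinner : ∀ u ∈ Ioo (0:ℝ) 1,
      ∫ v in Ioo (0:ℝ) 1, H * (2 * H - 1) * |u + d - v| ^ (2 * H - 2)
        = H * ((d + u) ^ (2 * H - 1) - (d - 1 + u) ^ (2 * H - 1)) := by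
    intro u hu
    rw [setIntegral_congr_fun measurableSet_Ioo (g := fun v => H * (2 * H - 1) * (u + d - v) ^ (2 * H - 2))
      fun v hv => by rw [abs_of_pos (by linarith [hu.1, hv.2])], integral_const_mul,
      integral_Ioo_zero_one_sub_rpow (by linarith), show 2 * H - 2 + 1 = 2 * H - 1 by ring,
      mul_assoc, mul_div_cancel₀ _ hs.ne']
    ring_nf
  have hint : ∀ a : ℝ, IntegrableOn (fun u => (a + u) ^ (2 * H - 1)) (Ioo 0 1) :=
    fun a => ((continuous_rpow_const hs.le).comp (continuous_const_add a)).integrableOn_Icc.mono_set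
      Ioo_subset_Icc_self
  unfold fbmBlockCov
  rw [setIntegral_congr_fun measurableSet_Ioo hinner, integral_const_mul,
    integral_sub (hint d) (hint (d - 1)), integral_Ioo_zero_one_add_rpow (by linarith),
    integral_Ioo_zero_one_add_rpow (by linarith)]
  field_simp
  ring_nf

theorem fbmBlockCov_le_of_two_le {H d : ℝ} (hH : H ∈ Icc (1/2 : ℝ) 1) (hd : 2 ≤ d) :
    fbmBlockCov H d ≤ H * (2 * H - 1) := by
  have hα : 0 ≤ H * (2 * H - 1) := mul_nonneg (by linarith [hH.1]) (by linarith [hH.1])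
  have hbound : ∀ u ∈ Ioo (0:ℝ) 1, ∀ v ∈ Ioo (0:ℝ) 1,
      ‖H * (2 * H - 1) * |u + d - v| ^ (2 * H - 2)‖ ≤ H * (2 * H - 1) := by
    intro u hu v hv
    have h1 : 1 ≤ |u + d - v| := by rw [abs_of_pos (by linarith [hu.1, hv.2])]; linarith [hu.1, hv.2]
    rw [norm_of_nonneg (by positivity)]
    exact mul_le_of_le_one_right hα (rpow_le_one_of_one_le_of_nonpos h1 (by linarith [hH.2]))
  have hvol : volume.real (Ioo (0:ℝ) 1) = 1 := by simp
  calc fbmBlockCov H d ≤ ‖fbmBlockCov H d‖ := le_norm_self _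
    _ ≤ H * (2 * H - 1) * volume.real (Ioo (0:ℝ) 1) :=
      norm_setIntegral_le_of_norm_le_const measure_Ioo_lt_top fun u hu =>
        (norm_setIntegral_le_of_norm_le_const measure_Ioo_lt_top (hbound u hu)).trans_eq
          (by rw [hvol, mul_one])
    _ = H * (2 * H - 1) := by rw [hvol, mul_one]

theorem fbmBlockCov_natCast_le {H : ℝ} (hH : H ∈ Ioo (1/2 : ℝ) 1) {d : ℕ} (hd : 1 ≤ d) :
    fbmBlockCov H d ≤ ((d : ℝ) + 1) ^ (2 * H - 1) / 2 := by
  have hH' : H ∈ Icc (1/2 : ℝ) 1 := Ioo_subset_Icc_self hH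
  rcases hd.eq_or_lt with rfl | hd2
  · have hsq : (2:ℝ) ^ (2 * H) = 2 ^ (2 * H - 1) * 2 := by
      rw [← rpow_add_one two_ne_zero, sub_add_cancel]
    have hle : (2:ℝ) ^ (2 * H - 1) ≤ 2 :=
      (rpow_le_rpow_of_exponent_le one_le_two (by linarith [hH.2])).trans_eq (rpow_one 2)
    rw [Nat.cast_one, fbmBlockCov_of_one_le hH.1 le_rfl, sub_self, zero_rpow (by linarith [hH.1]),
      one_rpow, one_add_one_eq_two, hsq]
    linarith
  · have h3 : (3:ℝ) ≤ d + 1 := by exact_mod_cast (by omega : 3 ≤ d + 1)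
    calc fbmBlockCov H d ≤ H * (2 * H - 1) := fbmBlockCov_le_of_two_le hH' (by exact_mod_cast hd2)
      _ ≤ 3 ^ (2 * H - 1) / 2 := mul_two_mul_sub_one_le_three_rpow hH'
      _ ≤ ((d : ℝ) + 1) ^ (2 * H - 1) / 2 := by
        gcongr
        linarith [hH.1]

/-- For `H ∈ (1/2, 1)`, `α_H = H(2H-1)` and integers `i ≠ j` with
`i, j ≥ 1`, `∫₀^1 ∫₀^1 α_H |u + i - v - j|^{2H-2} du dv ≤ (1/2) max(i,j)^{2H-1}`. -/
theorem stmt_9 (H : ℝ) (hH : H ∈ Set.Ioo (1/2 : ℝ) 1)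
    (i j : ℕ) (hi : 1 ≤ i) (hj : 1 ≤ j) (hij : i ≠ j) :
    (∫ u in Set.Ioo (0:ℝ) 1, ∫ v in Set.Ioo (0:ℝ) 1,
        H * (2*H - 1) * |u + (i : ℝ) - v - (j : ℝ)| ^ (2*H - 2))
      ≤ (1/2) * (max (i : ℝ) (j : ℝ)) ^ (2*H - 1) := by
  simp_rw [show ∀ u v : ℝ, u + i - v - j = u + (i - j : ℝ) - v by intros; ring]
  change fbmBlockCov H (i - j) ≤ _
  wlog hji : j < i generalizing i j
  · rw [max_comm, ← fbmBlockCov_neg, neg_sub]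
    exact this j i hj hi hij.symm (by omega)
  have hd : ((i : ℝ) - j) = ((i - j : ℕ) : ℝ) := by rw [Nat.cast_sub hji.le]
  have hmax : ((i - j : ℕ) : ℝ) + 1 ≤ max (i : ℝ) j :=
    le_max_of_le_left (by exact_mod_cast (by omega : i - j + 1 ≤ i))
  rw [hd]
  calc fbmBlockCov H (i - j : ℕ) ≤ (((i - j : ℕ) : ℝ) + 1) ^ (2 * H - 1) / 2 :=
        fbmBlockCov_natCast_le hH (by omega)
    _ ≤ (1/2) * (max (i : ℝ) j) ^ (2 * H - 1) := by
        rw [div_eq_inv_mul, one_div]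
        gcongr
        linarith [hH.1]
end

section
/- Let H ∈ (1/2, 1), set α_H = H(2H−1) and φ(y) = α_H |y|^{2H−2} for y ≠ 0, and let κ₁, κ₂ ∈ {0, 1}. Then there exists a constant C > 0, depending only on H, such that for all λ > 0 and all t > 0, one has λ^{2H+κ₁+κ₂} ∫₀^t ∫₀^t u^{κ₁} v^{κ₂} e^{−λ(u+v)} φ(u−v) du dv ≤ C. -/
/-!
Write `m = λ/2` and split `e^{-λx} = e^{-mx} e^{-mx}`: one factor absorbs the polynomial weight,
`x^κ e^{-mx} ≤ m^{-κ}` for `κ ≤ 1`. The remaining `v`-integral is bounded uniformly in `u`,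
`∫_0^∞ e^{-mv} |v - u|^{2H-2} dv ≤ c_H m^{1-2H}`, by integrating the singularity exactly on
`|v - u| ≤ 1/m` and using `|v - u|^{2H-2} ≤ m^{2-2H}` elsewhere. The last factor `e^{-mu}`
integrates to `1/m`, so the double integral is `O(λ^{-(2H+κ₁+κ₂)})`.
-/

open MeasureTheory Set Real

section AbsRpow

variable {r : ℝ}

lemma locallyIntegrable_abs_rpow (hr : -1 < r) :
    LocallyIntegrable (fun x : ℝ => |x| ^ r) := by
  refine locallyIntegrable_of_norm_le_rpow (C := 1) (α := -r) (by simp) (by simp; linarith) ?_ ?_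
  · exact Filter.Eventually.of_forall fun x => by simp [Real.abs_rpow_of_nonneg (abs_nonneg x)]
  · exact (by fun_prop : Measurable fun x : ℝ => |x| ^ r).aestronglyMeasurable

lemma integral_Icc_neg_abs_rpow (hr : -1 < r) {d : ℝ} (hd : 0 ≤ d) :
    ∫ x in Icc (-d) d, |x| ^ r = 2 * (d ^ (r + 1) / (r + 1)) := by
  have hint (a b : ℝ) : IntervalIntegrable (fun x : ℝ => |x| ^ r) volume a b :=
    ((locallyIntegrable_abs_rpow hr).integrableOn_isCompact isCompact_uIcc).intervalIntegrable
  have hpos : ∫ x in (0 : ℝ)..d, |x| ^ r = d ^ (r + 1) / (r + 1) := by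
    rw [intervalIntegral.integral_congr (g := fun x => x ^ r) fun x hx => by
        rw [uIcc_of_le hd] at hx; simp [abs_of_nonneg hx.1],
      integral_rpow (Or.inl hr), zero_rpow (by linarith), sub_zero]
  have hneg : ∫ x in -d..0, |x| ^ r = d ^ (r + 1) / (r + 1) := by
    have := intervalIntegral.integral_comp_neg (a := 0) (b := d) (fun x => |x| ^ r)
    simp only [abs_neg, neg_zero] at this
    rw [← this, hpos]
  rw [integral_Icc_eq_integral_Ioc, ← intervalIntegral.integral_of_le (by linarith),
    ← intervalIntegral.integral_add_adjacent_intervals (hint _ _) (hint _ _), hneg, hpos]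
  ring

end AbsRpow

section ExpAbsRpow

variable {r m : ℝ}

lemma exp_mul_abs_sub_rpow_le (hr : r ≤ 0) (hm : 0 ≤ m) {d : ℝ} (hd : 0 < d) {v : ℝ}
    (hv : 0 ≤ v) (u : ℝ) :
    exp (-m * v) * |v - u| ^ r ≤
      (Icc (-d) d).indicator (fun x => |x| ^ r) (v - u) + d ^ r * exp (-m * v) := by
  have hexp : exp (-m * v) ≤ 1 := exp_le_one_iff.mpr (by nlinarith)
  have hpow : 0 ≤ |v - u| ^ r := rpow_nonneg (abs_nonneg _) r
  by_cases hvu : |v - u| ≤ d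
  · rw [indicator_of_mem (show v - u ∈ Icc (-d) d from abs_le.mp hvu)]
    nlinarith [mul_nonneg (rpow_nonneg hd.le r) (exp_pos (-m * v)).le]
  · have hle : |v - u| ^ r ≤ d ^ r := rpow_le_rpow_of_nonpos hd (not_le.mp hvu).le hr
    rw [indicator_of_notMem (show v - u ∉ Icc (-d) d from fun h => hvu (abs_le.mpr h)), zero_add,
      mul_comm]
    exact mul_le_mul_of_nonneg_right hle (exp_pos _).le

lemma integrable_indicator_Icc_abs_sub_rpow (hr : -1 < r) (d u : ℝ) :
    Integrable fun v => (Icc (-d) d).indicator (fun x => |x| ^ r) (v - u) :=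
  (((locallyIntegrable_abs_rpow hr).integrableOn_isCompact isCompact_Icc).integrable_indicator
    measurableSet_Icc).comp_sub_right u

lemma integrableOn_exp_mul_abs_sub_rpow (hr : -1 < r) (hr0 : r ≤ 0) (hm : 0 < m) (u : ℝ) :
    IntegrableOn (fun v => exp (-m * v) * |v - u| ^ r) (Ioi 0) := by
  refine Integrable.mono' (((integrable_indicator_Icc_abs_sub_rpow hr 1 u).integrableOn).add
    ((exp_neg_integrableOn_Ioi 0 hm).const_mul ((1 : ℝ) ^ r)))
    (by fun_prop : Measurable fun v => exp (-m * v) * |v - u| ^ r).aestronglyMeasurable ?_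
  filter_upwards [ae_restrict_mem measurableSet_Ioi] with v hv
  rw [norm_of_nonneg (by positivity)]
  exact exp_mul_abs_sub_rpow_le hr0 hm.le one_pos (le_of_lt hv) u

lemma setIntegral_exp_mul_abs_sub_rpow_le (hr : -1 < r) (hr0 : r ≤ 0) (hm : 0 < m) (u : ℝ) :
    ∫ v in Ioi 0, exp (-m * v) * |v - u| ^ r ≤ (r + 3) / (r + 1) * m⁻¹ ^ (r + 1) := by
  set d := m⁻¹
  have hd : 0 < d := inv_pos.mpr hm
  have hloc := integrable_indicator_Icc_abs_sub_rpow hr d u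
  have hexp := exp_neg_integrableOn_Ioi 0 hm
  calc ∫ v in Ioi 0, exp (-m * v) * |v - u| ^ r
      ≤ ∫ v in Ioi 0, ((Icc (-d) d).indicator (fun x => |x| ^ r) (v - u) + d ^ r * exp (-m * v)) :=
        setIntegral_mono_on (integrableOn_exp_mul_abs_sub_rpow hr hr0 hm u)
          (hloc.integrableOn.add (hexp.const_mul _)) measurableSet_Ioi
          fun v hv => exp_mul_abs_sub_rpow_le hr0 hm.le hd (le_of_lt hv) u
    _ = (∫ v in Ioi 0, (Icc (-d) d).indicator (fun x => |x| ^ r) (v - u)) + d ^ r * d := by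
        rw [integral_add hloc.integrableOn (hexp.const_mul _), integral_const_mul,
          integral_exp_mul_Ioi (neg_lt_zero.mpr hm)]
        simp [d]
    _ ≤ (∫ v, (Icc (-d) d).indicator (fun x => |x| ^ r) (v - u)) + d ^ r * d := by
        grw [setIntegral_le_integral hloc
          (.of_forall fun v => indicator_nonneg (fun x _ => by positivity) _)]
    _ = (r + 3) / (r + 1) * d ^ (r + 1) := by
        rw [integral_sub_right_eq_self (fun v => (Icc (-d) d).indicator (fun x => |x| ^ r) v) u,
          integral_indicator measurableSet_Icc, integral_Icc_neg_abs_rpow hr hd.le,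
          ← rpow_add_one hd.ne']
        field_simp [(by linarith : r + 1 ≠ 0)]
        ring

end ExpAbsRpow

lemma setIntegral_le_setIntegral_of_subset {α : Type*} [MeasurableSpace α] {μ : Measure α}
    {f g : α → ℝ} {s t : Set α} (hs : MeasurableSet s) (ht : MeasurableSet t) (hst : s ⊆ t)
    (hg : IntegrableOn g t μ) (hf : ∀ x ∈ s, 0 ≤ f x) (hfg : ∀ x ∈ s, f x ≤ g x)
    (hg0 : ∀ x ∈ t, 0 ≤ g x) :
    ∫ x in s, f x ∂μ ≤ ∫ x in t, g x ∂μ :=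
  calc ∫ x in s, f x ∂μ ≤ ∫ x in s, g x ∂μ :=
        integral_mono_of_nonneg (ae_restrict_of_forall_mem hs hf) (hg.mono_set hst)
          (ae_restrict_of_forall_mem hs hfg)
    _ ≤ ∫ x in t, g x ∂μ :=
        setIntegral_mono_set hg (ae_restrict_of_forall_mem ht hg0) (.of_forall hst)

lemma pow_mul_exp_neg_mul_le {m x : ℝ} (hm : 0 < m) (hx : 0 ≤ x) {κ : ℕ} (hκ : κ ≤ 1) :
    x ^ κ * exp (-m * x) ≤ m⁻¹ ^ κ := by
  interval_cases κ
  · simpa using exp_le_one_iff.mpr (by nlinarith : -m * x ≤ 0)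
  · rw [pow_one, pow_one, neg_mul, exp_neg, ← div_eq_mul_inv, div_le_iff₀ (exp_pos _),
      inv_mul_eq_div, le_div_iff₀ hm]
    linarith [add_one_le_exp (m * x)]

lemma pow_mul_pow_mul_exp_mul_abs_sub_rpow_le {r l u v : ℝ} (hl : 0 < l) (hu : 0 ≤ u) (hv : 0 ≤ v)
    {κ₁ κ₂ : ℕ} (hκ₁ : κ₁ ≤ 1) (hκ₂ : κ₂ ≤ 1) :
    u ^ κ₁ * v ^ κ₂ * exp (-l * (u + v)) * |u - v| ^ r ≤
      (2 / l) ^ κ₁ * (2 / l) ^ κ₂ * exp (-(l / 2) * u) * (exp (-(l / 2) * v) * |v - u| ^ r) := by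
  have hm : 0 < l / 2 := half_pos hl
  have hsplit : exp (-l * (u + v)) =
      exp (-(l / 2) * u) * exp (-(l / 2) * u) * exp (-(l / 2) * v) * exp (-(l / 2) * v) := by
    rw [← exp_add, ← exp_add, ← exp_add]; ring_nf
  have hu' := pow_mul_exp_neg_mul_le hm hu hκ₁
  have hv' := pow_mul_exp_neg_mul_le hm hv hκ₂
  rw [inv_div] at hu' hv'
  rw [hsplit, abs_sub_comm u v]
  calc u ^ κ₁ * v ^ κ₂ * (exp (-(l / 2) * u) * exp (-(l / 2) * u) * exp (-(l / 2) * v) *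
        exp (-(l / 2) * v)) * |v - u| ^ r
      = (u ^ κ₁ * exp (-(l / 2) * u)) * (v ^ κ₂ * exp (-(l / 2) * v)) *
          (exp (-(l / 2) * u) * (exp (-(l / 2) * v) * |v - u| ^ r)) := by ring
    _ ≤ (2 / l) ^ κ₁ * (2 / l) ^ κ₂ *
          (exp (-(l / 2) * u) * (exp (-(l / 2) * v) * |v - u| ^ r)) := by gcongr
    _ = _ := by ring

lemma setIntegral_Ioo_pow_mul_pow_mul_exp_mul_abs_sub_rpow_le {r l u : ℝ} (hr : -1 < r)
    (hr0 : r ≤ 0) (hl : 0 < l) (hu : 0 ≤ u) {κ₁ κ₂ : ℕ} (hκ₁ : κ₁ ≤ 1) (hκ₂ : κ₂ ≤ 1) (t : ℝ) :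
    ∫ v in Ioo 0 t, u ^ κ₁ * v ^ κ₂ * exp (-l * (u + v)) * |u - v| ^ r ≤
      (r + 3) / (r + 1) * (2 / l) ^ κ₁ * (2 / l) ^ κ₂ * (2 / l) ^ (r + 1) *
        exp (-(l / 2) * u) := by
  have hm : 0 < l / 2 := half_pos hl
  calc ∫ v in Ioo 0 t, u ^ κ₁ * v ^ κ₂ * exp (-l * (u + v)) * |u - v| ^ r
      ≤ ∫ v in Ioi 0, (2 / l) ^ κ₁ * (2 / l) ^ κ₂ * exp (-(l / 2) * u) *
          (exp (-(l / 2) * v) * |v - u| ^ r) :=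
        setIntegral_le_setIntegral_of_subset measurableSet_Ioo measurableSet_Ioi
          Ioo_subset_Ioi_self ((integrableOn_exp_mul_abs_sub_rpow hr hr0 hm u).const_mul _)
          (fun v hv => by have := hv.1; positivity)
          (fun v hv => pow_mul_pow_mul_exp_mul_abs_sub_rpow_le hl hu hv.1.le hκ₁ hκ₂)
          (fun v _ => by positivity)
    _ ≤ (2 / l) ^ κ₁ * (2 / l) ^ κ₂ * exp (-(l / 2) * u) *
          ((r + 3) / (r + 1) * (2 / l) ^ (r + 1)) := by
        rw [integral_const_mul, ← inv_div l 2]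
        gcongr
        exact setIntegral_exp_mul_abs_sub_rpow_le hr hr0 hm u
    _ = _ := by ring

lemma rpow_mul_integral_pow_mul_pow_mul_exp_mul_abs_sub_rpow_le {r l : ℝ} (hr : -1 < r)
    (hr0 : r ≤ 0) (hl : 0 < l) {κ₁ κ₂ : ℕ} (hκ₁ : κ₁ ≤ 1) (hκ₂ : κ₂ ≤ 1) (t : ℝ) :
    l ^ (r + 2 + κ₁ + κ₂) *
        ∫ u in Ioo 0 t, ∫ v in Ioo 0 t, u ^ κ₁ * v ^ κ₂ * exp (-l * (u + v)) * |u - v| ^ r ≤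
      (r + 3) / (r + 1) * 2 ^ (r + 2 + κ₁ + κ₂) := by
  have hm : 0 < l / 2 := half_pos hl
  have h2l : 0 < 2 / l := by positivity
  have hc : 0 ≤ (r + 3) / (r + 1) := div_nonneg (by linarith) (by linarith)
  set K := (r + 3) / (r + 1) * (2 / l) ^ κ₁ * (2 / l) ^ κ₂ * (2 / l) ^ (r + 1)
  have houter : ∫ u in Ioo 0 t, ∫ v in Ioo 0 t, u ^ κ₁ * v ^ κ₂ * exp (-l * (u + v)) * |u - v| ^ r
      ≤ K * (2 / l) :=
    calc _ ≤ ∫ u in Ioi 0, K * exp (-(l / 2) * u) :=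
          setIntegral_le_setIntegral_of_subset measurableSet_Ioo measurableSet_Ioi
            Ioo_subset_Ioi_self ((exp_neg_integrableOn_Ioi 0 hm).const_mul _)
            (fun u hu => setIntegral_nonneg measurableSet_Ioo fun v hv => by
              have := hu.1; have := hv.1; positivity)
            (fun u hu => setIntegral_Ioo_pow_mul_pow_mul_exp_mul_abs_sub_rpow_le hr hr0 hl hu.1.le
              hκ₁ hκ₂ t)
            (fun u _ => by positivity)
      _ = K * (2 / l) := by
          rw [integral_const_mul, integral_exp_mul_Ioi (neg_lt_zero.mpr hm)]
          simp
  have hK : K * (2 / l) = (r + 3) / (r + 1) * (2 / l) ^ (r + 2 + κ₁ + κ₂) := by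
    simp only [K]
    rw [rpow_add_one h2l.ne', show r + 2 + κ₁ + κ₂ = r + (κ₁ + κ₂ + 2 : ℕ) by push_cast; ring,
      rpow_add h2l, rpow_natCast]
    ring
  refine (mul_le_mul_of_nonneg_left houter (by positivity)).trans_eq ?_
  rw [hK, mul_left_comm, ← mul_rpow hl.le h2l.le, mul_div_cancel₀ 2 hl.ne']

/-- For `H ∈ (1/2, 1)`, `φ(y) = H(2H-1)|y|^{2H-2}` and
`κ₁, κ₂ ∈ {0, 1}`, there is `C > 0` depending only on `H` such that for all
`λ > 0` and `t > 0`,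
`λ^{2H+κ₁+κ₂} ∫₀^t ∫₀^t u^{κ₁} v^{κ₂} e^{-λ(u+v)} φ(u-v) du dv ≤ C`. -/
theorem stmt_11 (H : ℝ) (hH : H ∈ Set.Ioo (1/2 : ℝ) 1) :
    ∃ C : ℝ, 0 < C ∧ ∀ κ₁ κ₂ : ℕ, κ₁ ≤ 1 → κ₂ ≤ 1 →
      ∀ l : ℝ, 0 < l → ∀ t : ℝ, 0 < t →
      l ^ (2*H + (κ₁ : ℝ) + (κ₂ : ℝ)) *
        (∫ u in Set.Ioo (0:ℝ) t, ∫ v in Set.Ioo (0:ℝ) t,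
            u ^ κ₁ * v ^ κ₂ * Real.exp (-l * (u + v)) *
              (H * (2*H - 1) * |u - v| ^ (2*H - 2)))
        ≤ C := by
  obtain ⟨hH1, hH2⟩ := hH
  refine ⟨16 * (H * (2 * H + 1)), by positivity, fun κ₁ κ₂ hκ₁ hκ₂ l hl t _ => ?_⟩
  have hbound := rpow_mul_integral_pow_mul_pow_mul_exp_mul_abs_sub_rpow_le (r := 2 * H - 2)
    (by linarith) (by linarith) hl hκ₁ hκ₂ t
  rw [show 2 * H - 2 + 2 + κ₁ + κ₂ = 2 * H + κ₁ + κ₂ by ring,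
    show 2 * H - 2 + 3 = 2 * H + 1 by ring, show 2 * H - 2 + 1 = 2 * H - 1 by ring] at hbound
  have hexp : (2 : ℝ) ^ (2 * H + κ₁ + κ₂) ≤ 2 ^ (4 : ℝ) := by
    have : (κ₁ : ℝ) ≤ 1 := by exact_mod_cast hκ₁
    have : (κ₂ : ℝ) ≤ 1 := by exact_mod_cast hκ₂
    exact rpow_le_rpow_of_exponent_le one_le_two (by linarith)
  have hconst : H * (2 * H - 1) * ((2 * H + 1) / (2 * H - 1)) = H * (2 * H + 1) := by
    rw [mul_assoc, mul_div_cancel₀ _ (by linarith : 2 * H - 1 ≠ 0)]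
  have hA : 0 ≤ H * (2 * H - 1) := by nlinarith
  simp only [mul_left_comm _ (H * (2 * H - 1)), integral_const_mul]
  grw [hbound, ← mul_assoc, hconst, hexp]
  norm_num
  linarith
end
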